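/- arXiv:math/0612757 — 8 statements merged into one kernel-verified Lean document; each statement's English description precedes it below -/
import Mathlib

section
/- A nondegenerate convex reflector is uniquely determined by its focal function: if R = ∂B is a nondegenerate convex reflector with focal function p, then B = {X ∈ ℝ^{n+1} : ‖X‖ − ⟨X,y⟩ ≤ p(y) for all y ∈ Sⁿ}, i.e. B coincides with the intersection of the solid paraboloids bounded by its supporting paraboloids. -/
/-!
Each `X ∈ B` lies below every supporting paraboloid because `p` is a supremum over the compact
set `B`. Conversely `p ≤ p̃`, since `B` lies in each solid paraboloid `‖X‖ - ⟪X,y⟫ ≤ p̃(y)` defining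
it; hence the intersection of the solid paraboloids for `p` is contained in the one for `p̃`,
which is `B`.
-/

open scoped InnerProductSpace ENNReal
open Metric Set

noncomputable section

/-- Euclidean space `ℝ^{n+1}`. -/
abbrev E (n : ℕ) : Type := EuclideanSpace ℝ (Fin (n + 1))

/-- The unit sphere `Sⁿ` centered at the origin in `ℝ^{n+1}`. -/
def sph (n : ℕ) : Set (E n) := Metric.sphere (0 : E n) 1

/-- `B` is the convex body of a nondegenerate convex reflector: `B` is the intersection of the
solid confocal paraboloids `{X : ‖X‖ - ⟪X,y⟫ ≤ p̃ y}` for some `p̃ : Sⁿ → (0,∞]`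
(encoded via `ENNReal`), `B` is compact and the origin is an interior point of `B`.
The reflector itself is `R = frontier B`. -/
def IsReflectorBody (n : ℕ) (B : Set (E n)) : Prop :=
  IsCompact B ∧ (0 : E n) ∈ interior B ∧
    ∃ pt : E n → ℝ≥0∞, (∀ y ∈ sph n, 0 < pt y) ∧
      B = {X : E n | ∀ y ∈ sph n, ENNReal.ofReal (‖X‖ - ⟪X, y⟫_ℝ) ≤ pt y}

/-- The focal function `p(y) = sup_{X ∈ B} (‖X‖ - ⟪X, y⟫)` of the reflector `∂B`. -/
def focal (n : ℕ) (B : Set (E n)) (y : E n) : ℝ :=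
  sSup ((fun X => ‖X‖ - ⟪X, y⟫_ℝ) '' B)

/-- The radial function `ρ(x) = sup {λ ≥ 0 : λ x ∈ B}`. -/
def radial (n : ℕ) (B : Set (E n)) (x : E n) : ℝ :=
  sSup {l : ℝ | 0 ≤ l ∧ l • x ∈ B}

/-- The support function `h(U) = sup_{X ∈ B} ⟪X, U⟫`. -/
def suppFn (n : ℕ) (B : Set (E n)) (U : E n) : ℝ :=
  sSup ((fun X => ⟪X, U⟫_ℝ) '' B)

/-- The extended focal function `P(Y) = sup_{X ∈ B} (‖X‖‖Y‖ - ⟪X, Y⟫)` on all of `ℝ^{n+1}`. -/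
def extFocal (n : ℕ) (B : Set (E n)) (Y : E n) : ℝ :=
  sSup ((fun X => ‖X‖ * ‖Y‖ - ⟪X, Y⟫_ℝ) '' B)

/-- The directrix `D(R) = {X - ‖X‖y : X ∈ R, y ∈ Sⁿ, ‖X‖ - ⟪X,y⟫ = p(y)}` of the
reflector `R = frontier B`. -/
def directrix (n : ℕ) (B : Set (E n)) : Set (E n) :=
  {Z : E n | ∃ X ∈ frontier B, ∃ y ∈ sph n,
    ‖X‖ - ⟪X, y⟫_ℝ = focal n B y ∧ Z = X - ‖X‖ • y}

theorem le_focal {n : ℕ} {B : Set (E n)} (hB : IsCompact B) {X : E n} (hX : X ∈ B) (y : E n) :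
    ‖X‖ - ⟪X, y⟫_ℝ ≤ focal n B y :=
  le_csSup (hB.image (continuous_norm.sub (continuous_id.inner continuous_const))).bddAbove
    ⟨X, hX, rfl⟩

theorem focal_le {n : ℕ} {B : Set (E n)} {y : E n} {c : ℝ} (hc : 0 ≤ c)
    (h : ∀ X ∈ B, ‖X‖ - ⟪X, y⟫_ℝ ≤ c) : focal n B y ≤ c :=
  Real.sSup_le (by rintro _ ⟨X, hX, rfl⟩; exact h X hX) hc

theorem ofReal_focal_le {n : ℕ} {B : Set (E n)} {y : E n} {t : ℝ≥0∞}
    (h : ∀ X ∈ B, ENNReal.ofReal (‖X‖ - ⟪X, y⟫_ℝ) ≤ t) : ENNReal.ofReal (focal n B y) ≤ t := by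
  rcases eq_or_ne t ⊤ with rfl | ht
  · exact le_top
  · rw [ENNReal.ofReal_le_iff_le_toReal ht]
    exact focal_le ENNReal.toReal_nonneg fun X hX ↦ (ENNReal.ofReal_le_iff_le_toReal ht).mp (h X hX)

theorem statement1_general (n : ℕ) (B : Set (E n)) (hB : IsReflectorBody n B) :
    B = {X : E n | ∀ y ∈ sph n, ‖X‖ - ⟪X, y⟫_ℝ ≤ focal n B y} := by
  obtain ⟨hcomp, -, pt, -, hBeq⟩ := hB
  refine Subset.antisymm (fun X hX y _ ↦ le_focal hcomp hX y) fun X hX ↦ hBeq.superset ?_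
  intro y hy
  have hp : ENNReal.ofReal (focal n B y) ≤ pt y :=
    ofReal_focal_le fun Z hZ ↦ hBeq.subset hZ y hy
  exact (ENNReal.ofReal_le_ofReal (hX y hy)).trans hp

/-- A nondegenerate convex reflector is uniquely determined by its focal function:
`B` coincides with the intersection of the solid paraboloids bounded by its supporting
paraboloids, i.e. `B = {X : ‖X‖ - ⟪X,y⟫ ≤ p(y) for all y ∈ Sⁿ}`. -/
theorem statement1 (n : ℕ) (hn : 1 ≤ n) (B : Set (E n)) (hB : IsReflectorBody n B) :
    B = {X : E n | ∀ y ∈ sph n, ‖X‖ - ⟪X, y⟫_ℝ ≤ focal n B y} :=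
  statement1_general n B hB
end
end

section
/- Let R = ∂B be a nondegenerate convex reflector with focal function p and radial function ρ. Then for every x ∈ Sⁿ, ρ(x) = inf{ p(y)/(1 − ⟨x,y⟩) : y ∈ Sⁿ, y ≠ x }. -/
open scoped InnerProductSpace ENNReal
open Metric Set

noncomputable section

/-- For every `x ∈ Sⁿ`,
`ρ(x) = inf { p(y)/(1 - ⟪x,y⟫) : y ∈ Sⁿ, y ≠ x }`. -/
theorem statement2 (n : ℕ) (hn : 1 ≤ n) (B : Set (E n)) (hB : IsReflectorBody n B)
    (x : E n) (hx : x ∈ sph n) :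
    radial n B x =
      sInf {t : ℝ | ∃ y ∈ sph n, y ≠ x ∧ t = focal n B y / (1 - ⟪x, y⟫_ℝ)} := by
  obtain ⟨hBc, h0, pt, hpt, hBeq⟩ := hB
  have h0B : (0 : E n) ∈ B := interior_subset h0
  have hBne : B.Nonempty := ⟨0, h0B⟩
  have hxn : ‖x‖ = 1 := by simpa [sph] using hx
  have hcont : ∀ y : E n, ContinuousOn (fun X : E n => ‖X‖ - ⟪X, y⟫_ℝ) B := fun y =>
    (continuous_norm.sub (continuous_id.inner continuous_const)).continuousOn
  have hfb : ∀ y : E n, BddAbove ((fun X : E n => ‖X‖ - ⟪X, y⟫_ℝ) '' B) := fun y =>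
    hBc.bddAbove_image (hcont y)
  have hple : ∀ X ∈ B, ∀ y : E n, ‖X‖ - ⟪X, y⟫_ℝ ≤ focal n B y := fun X hX y =>
    le_csSup (hfb y) ⟨X, hX, rfl⟩
  have hp0 : ∀ y : E n, 0 ≤ focal n B y := fun y => by
    simpa using hple 0 h0B y
  -- membership criterion
  have hmem : ∀ X : E n, (∀ y ∈ sph n, ‖X‖ - ⟪X, y⟫_ℝ ≤ focal n B y) → X ∈ B := by
    intro X hX
    rw [hBeq]
    intro y hy
    obtain ⟨X₀, hX₀, hX₀eq⟩ := hBc.exists_sSup_image_eq hBne (hcont y)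
    calc ENNReal.ofReal (‖X‖ - ⟪X, y⟫_ℝ) ≤ ENNReal.ofReal (focal n B y) :=
          ENNReal.ofReal_le_ofReal (hX y hy)
      _ = ENNReal.ofReal (‖X₀‖ - ⟪X₀, y⟫_ℝ) := by rw [focal, hX₀eq]
      _ ≤ pt y := by rw [hBeq] at hX₀; exact hX₀ y hy
  set S := {l : ℝ | 0 ≤ l ∧ l • x ∈ B} with hS
  have hSne : S.Nonempty := ⟨0, le_refl 0, by simpa using h0B⟩
  obtain ⟨R, hR⟩ := hBc.isBounded.subset_closedBall 0
  have hSbdd : BddAbove S := by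
    refine ⟨R, fun l hl => ?_⟩
    have h := hR hl.2
    rw [mem_closedBall, dist_zero_right, norm_smul, hxn, mul_one, Real.norm_eq_abs,
      abs_of_nonneg hl.1] at h
    exact h
  have hρ0 : 0 ≤ radial n B x := le_csSup hSbdd ⟨le_refl 0, by simpa using h0B⟩
  set T := {t : ℝ | ∃ y ∈ sph n, y ≠ x ∧ t = focal n B y / (1 - ⟪x, y⟫_ℝ)} with hT
  have hsmul : ∀ (l : ℝ), 0 ≤ l → ∀ y : E n, ‖l • x‖ - ⟪l • x, y⟫_ℝ = l * (1 - ⟪x, y⟫_ℝ) := by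
    intro l hl y
    rw [norm_smul, hxn, mul_one, Real.norm_eq_abs, abs_of_nonneg hl, real_inner_smul_left]
    ring
  have hlb : ∀ t ∈ T, radial n B x ≤ t := by
    rintro t ⟨y, hy, hyx, rfl⟩
    have hyn : ‖y‖ = 1 := by simpa [sph] using hy
    have hc : 0 < 1 - ⟪x, y⟫_ℝ := by
      have := (inner_lt_one_iff_real_of_norm_eq_one hxn hyn).mpr (Ne.symm hyx)
      linarith
    refine csSup_le hSne fun l hl => ?_
    rw [le_div_iff₀ hc]
    calc l * (1 - ⟪x, y⟫_ℝ) = ‖l • x‖ - ⟪l • x, y⟫_ℝ := (hsmul l hl.1 y).symm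
      _ ≤ focal n B y := hple _ hl.2 y
  have hTne : T.Nonempty := by
    refine ⟨focal n B (-x) / (1 - ⟪x, -x⟫_ℝ), -x, ?_, ?_, rfl⟩
    · simp [sph, mem_sphere_zero_iff_norm, hxn]
    · intro h
      rw [neg_eq_iff_add_eq_zero] at h
      have h2 : (2 : ℝ) • x = 0 := by rw [two_smul]; exact h
      have hx0 : x = 0 := (smul_eq_zero.mp h2).resolve_left (by norm_num)
      simp [hx0] at hxn
  refine le_antisymm (le_csInf hTne hlb) ?_
  by_contra hlt
  push_neg at hlt
  set m := sInf T with hm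
  have hm0 : 0 ≤ m := le_trans hρ0 hlt.le
  have hmB : m • x ∈ B := by
    refine hmem _ fun y hy => ?_
    rw [hsmul m hm0 y]
    by_cases hyx : y = x
    · subst hyx
      rw [real_inner_self_eq_norm_sq, hxn]
      simpa using hp0 y
    · have hyn : ‖y‖ = 1 := by simpa [sph] using hy
      have hc : 0 < 1 - ⟪x, y⟫_ℝ := by
        have := (inner_lt_one_iff_real_of_norm_eq_one hxn hyn).mpr (Ne.symm hyx)
        linarith
      have hmle : m ≤ focal n B y / (1 - ⟪x, y⟫_ℝ) :=
        csInf_le ⟨radial n B x, hlb⟩ ⟨y, hy, hyx, rfl⟩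
      rw [le_div_iff₀ hc] at hmle
      linarith
  exact absurd (le_csSup hSbdd ⟨hm0, hmB⟩) (not_le.mpr hlt)
end
end

section
/- Let R = ∂B be a nondegenerate convex reflector with support function h and radial function ρ. For every u ∈ Sⁿ, the contact set C_u = R ∩ {Z ∈ ℝ^{n+1} : ⟨Z,u⟩ = h(u)} consists of exactly one point; that is, there exists a unique x ∈ Sⁿ such that C_u = {ρ(x)x}. -/
/-!
Each function `X ↦ ‖X‖ - ⟪X, y⟫` is the norm minus a linear form, so the body `B` is convex, and
where the triangle inequality for `X, Y ∈ B` is strict, every function `‖·‖ - ⟪·, y⟫` lies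
uniformly below the larger of its values at `X` and `Y` on a neighbourhood of the midpoint: the
midpoint is interior. Two distinct points of the contact set `C_u` have the same positive value
`h(u)` of `⟪·, u⟫`, hence do not lie on a common ray, and their midpoint would then be an
interior point of `B` at which `⟪·, u⟫` still attains its maximum `h(u)`, which is impossible.
So `C_u` is a single point `X₀ ≠ 0`, and convexity with `0 ∈ interior B` gives
`ρ(X₀ / ‖X₀‖) = ‖X₀‖`.
-/

open scoped InnerProductSpace ENNReal
open Metric Set

noncomputable section

section InnerProductSpace

variable {F : Type*} [NormedAddCommGroup F] [InnerProductSpace ℝ F]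

def paraboloidBody (pt : F → ℝ≥0∞) : Set F :=
  {X | ∀ y ∈ sphere (0 : F) 1, ENNReal.ofReal (‖X‖ - ⟪X, y⟫_ℝ) ≤ pt y}

lemma SameRay.eq_of_inner_eq {X Y u : F} (h : SameRay ℝ X Y) (hXY : ⟪X, u⟫_ℝ = ⟪Y, u⟫_ℝ)
    (hX : ⟪X, u⟫_ℝ ≠ 0) : X = Y := by
  obtain ⟨r, -, rfl⟩ := h.exists_nonneg_left (fun h0 => hX (by simp [h0]))
  rw [real_inner_smul_left] at hXY
  obtain rfl : r = 1 := mul_right_cancel₀ hX (hXY.symm.trans (one_mul _).symm)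
  exact (one_smul ℝ X).symm

lemma not_sameRay_smul_smul {X Y : F} (h : ¬SameRay ℝ X Y) {a b : ℝ} (ha : 0 < a) (hb : 0 < b) :
    ¬SameRay ℝ (a • X) (b • Y) := fun hab => h <| by
  simpa [inv_smul_smul₀ ha.ne', inv_smul_smul₀ hb.ne'] using
    (hab.pos_smul_left (inv_pos.2 ha)).pos_smul_right (inv_pos.2 hb)

lemma eq_inv_norm_smul_of_smul_eq {r : ℝ} {x X : F} (hr : 0 ≤ r) (hx : ‖x‖ = 1) (hX : X ≠ 0)
    (h : r • x = X) : x = ‖X‖⁻¹ • X := by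
  subst h
  have hr0 : r ≠ 0 := by rintro rfl; simp at hX
  rw [norm_smul, hx, mul_one, Real.norm_of_nonneg hr, inv_smul_smul₀ hr0]

lemma norm_sub_inner_le_add_two_mul_norm_sub {y : F} (hy : ‖y‖ ≤ 1) (Z M : F) :
    ‖Z‖ - ⟪Z, y⟫_ℝ ≤ ‖M‖ - ⟪M, y⟫_ℝ + 2 * ‖Z - M‖ := by
  have hnorm : ‖Z‖ ≤ ‖M‖ + ‖Z - M‖ := norm_le_norm_add_norm_sub' Z M
  have hinner : ⟪M - Z, y⟫_ℝ ≤ ‖Z - M‖ :=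
    calc ⟪M - Z, y⟫_ℝ ≤ ‖M - Z‖ * ‖y‖ := real_inner_le_norm _ _
      _ ≤ ‖M - Z‖ * 1 := by gcongr
      _ = ‖Z - M‖ := by rw [mul_one, norm_sub_rev]
  rw [inner_sub_left] at hinner
  linarith

lemma norm_sub_inner_smul_add_smul (X Y y : F) (a b : ℝ) :
    ‖a • X + b • Y‖ - ⟪a • X + b • Y, y⟫_ℝ =
      a * (‖X‖ - ⟪X, y⟫_ℝ) + b * (‖Y‖ - ⟪Y, y⟫_ℝ) - (a * ‖X‖ + b * ‖Y‖ - ‖a • X + b • Y‖) := by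
  rw [inner_add_left, real_inner_smul_left, real_inner_smul_left]
  ring

variable {pt : F → ℝ≥0∞}

lemma mem_paraboloidBody_of_le_max {X Y Z : F} (hX : X ∈ paraboloidBody pt)
    (hY : Y ∈ paraboloidBody pt)
    (hZ : ∀ y ∈ sphere (0 : F) 1, ‖Z‖ - ⟪Z, y⟫_ℝ ≤ max (‖X‖ - ⟪X, y⟫_ℝ) (‖Y‖ - ⟪Y, y⟫_ℝ)) :
    Z ∈ paraboloidBody pt := fun y hy =>
  calc ENNReal.ofReal (‖Z‖ - ⟪Z, y⟫_ℝ)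
      ≤ max (ENNReal.ofReal (‖X‖ - ⟪X, y⟫_ℝ)) (ENNReal.ofReal (‖Y‖ - ⟪Y, y⟫_ℝ)) := by
        rw [← ENNReal.ofReal_max]; exact ENNReal.ofReal_le_ofReal (hZ y hy)
    _ ≤ pt y := max_le (hX y hy) (hY y hy)

lemma convex_paraboloidBody : Convex ℝ (paraboloidBody pt) := by
  intro X hX Y hY a b ha hb hab
  refine mem_paraboloidBody_of_le_max hX hY fun y _ => ?_
  have hexcess : 0 ≤ a * ‖X‖ + b * ‖Y‖ - ‖a • X + b • Y‖ := by
    have := norm_add_le (a • X) (b • Y)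
    rw [norm_smul_of_nonneg ha, norm_smul_of_nonneg hb] at this
    linarith
  rw [norm_sub_inner_smul_add_smul]
  exact (sub_le_self _ hexcess).trans (Convex.combo_le_max _ _ ha hb hab)

lemma smul_add_smul_mem_interior_paraboloidBody {X Y : F} (hX : X ∈ paraboloidBody pt)
    (hY : Y ∈ paraboloidBody pt) (hXY : ¬SameRay ℝ X Y) {a b : ℝ} (ha : 0 < a) (hb : 0 < b)
    (hab : a + b = 1) : a • X + b • Y ∈ interior (paraboloidBody pt) := by
  set M := a • X + b • Y
  set g := a * ‖X‖ + b * ‖Y‖ - ‖M‖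
  have hg : 0 < g := by
    have := norm_add_lt_of_not_sameRay (not_sameRay_smul_smul hXY ha hb)
    rw [norm_smul_of_nonneg ha.le, norm_smul_of_nonneg hb.le] at this
    exact sub_pos.2 this
  rw [mem_interior_iff_mem_nhds, Metric.mem_nhds_iff]
  refine ⟨g / 2, half_pos hg, fun Z hZ => mem_paraboloidBody_of_le_max hX hY fun y hy => ?_⟩
  rw [mem_ball, dist_eq_norm] at hZ
  calc ‖Z‖ - ⟪Z, y⟫_ℝ ≤ ‖M‖ - ⟪M, y⟫_ℝ + 2 * ‖Z - M‖ :=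
        norm_sub_inner_le_add_two_mul_norm_sub (mem_sphere_zero_iff_norm.1 hy).le Z M
    _ ≤ ‖M‖ - ⟪M, y⟫_ℝ + g := by linarith
    _ = a * (‖X‖ - ⟪X, y⟫_ℝ) + b * (‖Y‖ - ⟪Y, y⟫_ℝ) := by
        rw [norm_sub_inner_smul_add_smul]; ring
    _ ≤ max (‖X‖ - ⟪X, y⟫_ℝ) (‖Y‖ - ⟪Y, y⟫_ℝ) := Convex.combo_le_max _ _ ha.le hb.le hab

end InnerProductSpace

section Reflector

variable {n : ℕ} {B : Set (E n)} {u : E n}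

lemma inner_le_suppFn (hB : IsCompact B) {X : E n} (hX : X ∈ B) : ⟪X, u⟫_ℝ ≤ suppFn n B u :=
  le_csSup (hB.image (continuous_id.inner continuous_const)).bddAbove ⟨X, hX, rfl⟩

lemma exists_inner_eq_suppFn (hB : IsCompact B) (hne : B.Nonempty) :
    ∃ X ∈ B, ⟪X, u⟫_ℝ = suppFn n B u :=
  (hB.image (continuous_id.inner continuous_const)).sSup_mem (hne.image _)

lemma inner_lt_suppFn_of_mem_interior (hB : IsCompact B) (hu : u ≠ 0) {W : E n}
    (hW : W ∈ interior B) : ⟪W, u⟫_ℝ < suppFn n B u := by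
  have hlim : Filter.Tendsto (fun t : ℝ => W + t • u) (nhdsWithin 0 (Ioi 0)) (nhds W) := by
    have := ((continuous_const.add (continuous_id.smul continuous_const)).tendsto
      (f := fun t : ℝ => W + t • u) 0)
    simpa using this.mono_left nhdsWithin_le_nhds
  obtain ⟨t, hWt, ht⟩ :=
    ((hlim.eventually (isOpen_interior.mem_nhds hW)).and self_mem_nhdsWithin).exists
  have hle := inner_le_suppFn (u := u) hB (interior_subset hWt)
  rw [inner_add_left, real_inner_smul_left, real_inner_self_eq_norm_sq] at hle
  have : 0 < t * ‖u‖ ^ 2 := mul_pos ht (by positivity)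
  linarith

lemma radial_inv_norm_smul_eq_norm (hB : Convex ℝ B) (h0 : 0 ∈ interior B) {X : E n}
    (hX : X ∈ B) (hXi : X ∉ interior B) : radial n B (‖X‖⁻¹ • X) = ‖X‖ := by
  have hX0 : X ≠ 0 := by rintro rfl; exact hXi h0
  refine IsGreatest.csSup_eq ⟨⟨norm_nonneg X, by rwa [smul_inv_smul₀ (norm_ne_zero_iff.2 hX0)]⟩,
    fun l ⟨_, hl⟩ => le_of_not_gt fun hlX => hXi ?_⟩
  have hl0 : 0 < l := (norm_nonneg X).trans_lt hlX
  -- `X` lies strictly between the interior point `0` and the point `l • ‖X‖⁻¹ • X` of `B`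
  have key := hB.combo_interior_self_mem_interior h0 hl (sub_pos.2 ((div_lt_one hl0).2 hlX))
    (div_nonneg (norm_nonneg X) hl0.le) (sub_add_cancel 1 _)
  rwa [smul_zero, zero_add, smul_smul, smul_smul, div_mul_cancel₀ _ hl0.ne',
    mul_inv_cancel₀ (norm_ne_zero_iff.2 hX0), one_smul] at key

variable {pt : E n → ℝ≥0∞}

lemma eq_of_inner_eq_suppFn (hB : IsCompact (paraboloidBody pt))
    (h0 : 0 ∈ interior (paraboloidBody pt)) (hu : u ≠ 0) {X Y : E n}
    (hX : X ∈ paraboloidBody pt) (hY : Y ∈ paraboloidBody pt)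
    (hXu : ⟪X, u⟫_ℝ = suppFn n (paraboloidBody pt) u)
    (hYu : ⟪Y, u⟫_ℝ = suppFn n (paraboloidBody pt) u) : X = Y := by
  by_contra hne
  have hpos : 0 < suppFn n (paraboloidBody pt) u := by
    simpa using inner_lt_suppFn_of_mem_interior hB hu h0
  have hXY : ¬SameRay ℝ X Y := fun h =>
    hne (h.eq_of_inner_eq (hXu.trans hYu.symm) (hXu ▸ hpos.ne'))
  have hmid := inner_lt_suppFn_of_mem_interior hB hu <|
    smul_add_smul_mem_interior_paraboloidBody hX hY hXY one_half_pos one_half_pos (add_halves 1)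
  rw [inner_add_left, real_inner_smul_left, real_inner_smul_left, hXu, hYu] at hmid
  linarith

lemma frontier_inter_inner_eq_suppFn (hB : IsCompact (paraboloidBody pt))
    (h0 : 0 ∈ interior (paraboloidBody pt)) (hu : u ≠ 0) {X₀ : E n}
    (hX₀ : X₀ ∈ paraboloidBody pt) (hX₀u : ⟪X₀, u⟫_ℝ = suppFn n (paraboloidBody pt) u) :
    frontier (paraboloidBody pt) ∩ {Z | ⟪Z, u⟫_ℝ = suppFn n (paraboloidBody pt) u} = {X₀} := by
  ext Z
  refine ⟨fun ⟨hZ, hZu⟩ => eq_of_inner_eq_suppFn hB h0 hu (hB.isClosed.frontier_subset hZ) hX₀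
    hZu hX₀u, ?_⟩
  rintro rfl
  exact ⟨⟨subset_closure hX₀, fun hi => (inner_lt_suppFn_of_mem_interior hB hu hi).ne hX₀u⟩, hX₀u⟩

end Reflector

theorem statement4_general (n : ℕ) (B R : Set (E n))
    (hB : IsReflectorBody n B) (hR : R = frontier B)
    (u : E n) (hu : u ∈ sph n) :
    ∃! x : E n, x ∈ sph n ∧
      R ∩ {Z : E n | ⟪Z, u⟫_ℝ = suppFn n B u} = {radial n B x • x} := by
  obtain ⟨hcpt, h0, pt, -, hBpt⟩ := hB
  change B = paraboloidBody pt at hBpt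
  subst hBpt hR
  have hu0 : u ≠ 0 := ne_zero_of_mem_unit_sphere ⟨u, hu⟩
  obtain ⟨X₀, hX₀, hX₀u⟩ := exists_inner_eq_suppFn (u := u) hcpt ⟨0, interior_subset h0⟩
  have hX₀i : X₀ ∉ interior (paraboloidBody pt) := fun hi =>
    (inner_lt_suppFn_of_mem_interior hcpt hu0 hi).ne hX₀u
  have hX₀0 : X₀ ≠ 0 := by rintro rfl; exact hX₀i h0
  have hcontact := frontier_inter_inner_eq_suppFn hcpt h0 hu0 hX₀ hX₀u
  have hrad := radial_inv_norm_smul_eq_norm convex_paraboloidBody h0 hX₀ hX₀i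
  refine ⟨‖X₀‖⁻¹ • X₀, ⟨?_, ?_⟩, fun x ⟨hx, hxC⟩ => ?_⟩
  · simpa [sph] using norm_smul_inv_norm (𝕜 := ℝ) hX₀0
  · rw [hcontact, hrad, smul_inv_smul₀ (norm_ne_zero_iff.2 hX₀0)]
  · rw [hcontact, singleton_eq_singleton_iff] at hxC
    exact eq_inv_norm_smul_of_smul_eq (Real.sSup_nonneg fun l hl => hl.1)
      (mem_sphere_zero_iff_norm.1 hx) hX₀0 hxC.symm

/-- For every `u ∈ Sⁿ`, the contact set `C_u = R ∩ {Z : ⟪Z,u⟫ = h(u)}`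
consists of exactly one point; there is a unique `x ∈ Sⁿ` with `C_u = {ρ(x) x}`. -/
theorem statement4 (n : ℕ) (hn : 1 ≤ n) (B R : Set (E n))
    (hB : IsReflectorBody n B) (hR : R = frontier B)
    (u : E n) (hu : u ∈ sph n) :
    ∃! x : E n, x ∈ sph n ∧
      R ∩ {Z : E n | ⟪Z, u⟫_ℝ = suppFn n B u} = {radial n B x • x} :=
  statement4_general n B R hB hR u hu

end
end

section
/- Let R = ∂B be a nondegenerate convex reflector, u ∈ Sⁿ, and X ∈ R a point with ⟨X,u⟩ = h(u), where h is the support function of R; set x = X/‖X‖. If P(y₁,q₁) and P(y₂,q₂) are paraboloids supporting to R at X whose tangent hyperplanes at X both equal α(u) = {Z : ⟨Z,u⟩ = h(u)} (equivalently, u = (x − yᵢ)/‖x − yᵢ‖ for i = 1,2), then y₁ = y₂ and q₁ = q₂. -/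
open scoped InnerProductSpace ENNReal
open Metric Set

noncomputable section

/-!
The tangent hyperplane of `P(y, q)` at `X` has normal `x - y`, so writing `t = ‖x - y‖` and `u` for
the common unit normal, `y = x - t • u`. Since `‖y‖ = 1` and `‖x‖ ≤ 1`, `t` is a positive root of
`t² - 2⟪x, u⟫ t + ‖x‖² - 1`, whose constant term is `≤ 0`, so it has only one positive root.
Hence `y` is determined by `x` and `u`, and then `q = ‖X‖ - ⟪X, y⟫` is determined as well.
-/

open NormedSpace

section UnitSphere

variable {F : Type*} [NormedAddCommGroup F] [InnerProductSpace ℝ F]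

lemma norm_normalize_le_one (x : F) : ‖normalize x‖ ≤ 1 := by
  by_cases hx : x = 0
  · simp [hx]
  · exact (norm_normalize hx).le

lemma norm_sq_eq_sub_normalize_sub (x y : F) :
    ‖y‖ ^ 2 = ‖x‖ ^ 2 - 2 * (‖x - y‖ * ⟪x, normalize (x - y)⟫_ℝ) + ‖x - y‖ ^ 2 := by
  have hinner : ⟪x, x - y⟫_ℝ = ‖x - y‖ * ⟪x, normalize (x - y)⟫_ℝ := by
    conv_lhs => rw [← norm_smul_normalize (x - y)]
    exact real_inner_smul_right _ _ _
  rw [← hinner, ← norm_sub_sq_real, sub_sub_cancel]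

lemma eq_of_normalize_sub_eq {x y₁ y₂ : F} (hx : ‖x‖ ≤ 1) (hy₁ : ‖y₁‖ = 1) (hy₂ : ‖y₂‖ = 1)
    (h : normalize (x - y₁) = normalize (x - y₂)) : y₁ = y₂ := by
  by_cases h₀ : x - y₁ = 0
  · have : x - y₂ = 0 := by rwa [← normalize_eq_zero_iff, ← h, normalize_eq_zero_iff]
    rw [← sub_eq_zero.mp h₀, ← sub_eq_zero.mp this]
  have h₀' : x - y₂ ≠ 0 := by rwa [ne_eq, ← normalize_eq_zero_iff, ← h, normalize_eq_zero_iff]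
  have hpos₁ : 0 < ‖x - y₁‖ := norm_pos_iff.mpr h₀
  have hpos₂ : 0 < ‖x - y₂‖ := norm_pos_iff.mpr h₀'
  have hroot₁ := norm_sq_eq_sub_normalize_sub x y₁
  have hroot₂ := norm_sq_eq_sub_normalize_sub x y₂
  rw [hy₁, h] at hroot₁
  rw [hy₂] at hroot₂
  have hx2 : ‖x‖ ^ 2 ≤ 1 := pow_le_one₀ (norm_nonneg x) hx
  -- the product of the two roots of the quadratic is `‖x‖² - 1 ≤ 0`
  have hst : ‖x - y₁‖ = ‖x - y₂‖ := by nlinarith [mul_pos hpos₁ hpos₂]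
  calc y₁ = x - ‖x - y₁‖ • normalize (x - y₁) := by rw [norm_smul_normalize, sub_sub_cancel]
    _ = x - ‖x - y₂‖ • normalize (x - y₂) := by rw [hst, h]
    _ = y₂ := by rw [norm_smul_normalize, sub_sub_cancel]

end UnitSphere

theorem statement5_general (n : ℕ) (R : Set (E n))
    (u : E n)
    (X : E n)
    (x : E n) (hx : x = ‖X‖⁻¹ • X)
    (y₁ y₂ : E n) (hy₁ : y₁ ∈ sph n) (hy₂ : y₂ ∈ sph n)
    (q₁ q₂ : ℝ)
    (hsupp₁ : (∀ Z ∈ R, ‖Z‖ - ⟪Z, y₁⟫_ℝ ≤ q₁) ∧ ‖X‖ - ⟪X, y₁⟫_ℝ = q₁)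
    (hsupp₂ : (∀ Z ∈ R, ‖Z‖ - ⟪Z, y₂⟫_ℝ ≤ q₂) ∧ ‖X‖ - ⟪X, y₂⟫_ℝ = q₂)
    (hu₁ : u = ‖x - y₁‖⁻¹ • (x - y₁))
    (hu₂ : u = ‖x - y₂‖⁻¹ • (x - y₂)) :
    y₁ = y₂ ∧ q₁ = q₂ := by
  have hx₁ : ‖x‖ ≤ 1 := hx ▸ norm_normalize_le_one X
  have hy : y₁ = y₂ :=
    eq_of_normalize_sub_eq hx₁ (mem_sphere_zero_iff_norm.mp hy₁)
      (mem_sphere_zero_iff_norm.mp hy₂) (hu₁.symm.trans hu₂)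
  exact ⟨hy, hsupp₁.2.symm.trans (hy ▸ hsupp₂.2)⟩

/-- If two paraboloids `P(y₁,q₁)`, `P(y₂,q₂)` both support `R` at a contact
point `X` of the supporting hyperplane `α(u)` and both have `α(u)` as their tangent
hyperplane at `X` (equivalently `u = (x - yᵢ)/‖x - yᵢ‖`), then they coincide. -/
theorem statement5 (n : ℕ) (hn : 1 ≤ n) (B R : Set (E n))
    (hB : IsReflectorBody n B) (hR : R = frontier B)
    (u : E n) (hu : u ∈ sph n)
    (X : E n) (hXR : X ∈ R) (hXu : ⟪X, u⟫_ℝ = suppFn n B u)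
    (x : E n) (hx : x = ‖X‖⁻¹ • X)
    (y₁ y₂ : E n) (hy₁ : y₁ ∈ sph n) (hy₂ : y₂ ∈ sph n)
    (q₁ q₂ : ℝ) (hq₁ : 0 < q₁) (hq₂ : 0 < q₂)
    (hsupp₁ : (∀ Z ∈ R, ‖Z‖ - ⟪Z, y₁⟫_ℝ ≤ q₁) ∧ ‖X‖ - ⟪X, y₁⟫_ℝ = q₁)
    (hsupp₂ : (∀ Z ∈ R, ‖Z‖ - ⟪Z, y₂⟫_ℝ ≤ q₂) ∧ ‖X‖ - ⟪X, y₂⟫_ℝ = q₂)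
    (hu₁ : u = ‖x - y₁‖⁻¹ • (x - y₁))
    (hu₂ : u = ‖x - y₂‖⁻¹ • (x - y₂)) :
    y₁ = y₂ ∧ q₁ = q₂ :=
  statement5_general n R u X x hx y₁ y₂ hy₁ hy₂ q₁ q₂ hsupp₁ hsupp₂ hu₁ hu₂
end
end

section
/- Let R = ∂B be a nondegenerate convex reflector. Then its support function h(U) = sup_{X∈B}⟨X,U⟩ is positive for U ≠ 0 and continuously differentiable on ℝ^{n+1} ∖ {0} (in particular h restricted to Sⁿ is of class C¹). -/
open scoped InnerProductSpace ENNReal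
open Metric Set

noncomputable section

/-- Auxiliary: a real number below a convex combination of `p` and `q` has `ofReal`
bounded by any `t` bounding `ofReal p` and `ofReal q`. -/
lemma aux_ofReal_combo {a b c p q : ℝ} {t : ℝ≥0∞} (ha : 0 ≤ a) (hb : 0 ≤ b) (hab : a + b = 1)
    (hc : c ≤ a * p + b * q) (hp : ENNReal.ofReal p ≤ t) (hq : ENNReal.ofReal q ≤ t) :
    ENNReal.ofReal c ≤ t := by
  rcases le_total p q with h | h
  · have : c ≤ q := by
      calc c ≤ a * p + b * q := hc
        _ ≤ a * q + b * q := add_le_add_left (mul_le_mul_of_nonneg_left h ha) _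
        _ = q := by rw [← add_mul, hab, one_mul]
    exact le_trans (ENNReal.ofReal_le_ofReal this) hq
  · have : c ≤ p := by
      calc c ≤ a * p + b * q := hc
        _ ≤ a * p + b * p := add_le_add_right (mul_le_mul_of_nonneg_left h hb) _
        _ = p := by rw [← add_mul, hab, one_mul]
    exact le_trans (ENNReal.ofReal_le_ofReal this) hp

set_option maxHeartbeats 1000000 in
/-- The support function `h(U) = sup_{X∈B} ⟪X,U⟫` of a nondegenerate convex
reflector is positive for `U ≠ 0` and continuously differentiable on `ℝ^{n+1} \ {0}`
(in particular its restriction to `Sⁿ` is of class `C¹`). -/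
theorem statement6 (n : ℕ) (hn : 1 ≤ n) (B : Set (E n)) (hB : IsReflectorBody n B) :
    (∀ U : E n, U ≠ 0 → 0 < suppFn n B U) ∧
    ContDiffOn ℝ 1 (suppFn n B) {(0 : E n)}ᶜ := by
  obtain ⟨hc, h0, pt, hptpos, hrep⟩ := hB
  have h0B : (0 : E n) ∈ B := interior_subset h0
  have hne : B.Nonempty := ⟨0, h0B⟩
  obtain ⟨R, hR⟩ := hc.isBounded.exists_norm_le
  have hR0 : 0 ≤ R := le_trans (norm_nonneg _) (hR 0 h0B)
  have hmemB : ∀ {Z : E n}, Z ∈ B →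
      ∀ y ∈ sph n, ENNReal.ofReal (‖Z‖ - ⟪Z, y⟫_ℝ) ≤ pt y := by
    intro Z hZ; rw [hrep] at hZ; exact hZ
  have hy1 : ∀ {y : E n}, y ∈ sph n → ‖y‖ = 1 := by
    intro y hy; simpa [sph] using hy
  -- Convexity of B
  have hconv : Convex ℝ B := by
    intro X hX Y hY a b ha hb hab
    rw [hrep]; intro y hy
    have h1 : ‖a • X + b • Y‖ ≤ a * ‖X‖ + b * ‖Y‖ := by
      calc ‖a • X + b • Y‖ ≤ ‖a • X‖ + ‖b • Y‖ := norm_add_le _ _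
        _ = a * ‖X‖ + b * ‖Y‖ := by
            rw [norm_smul, norm_smul, Real.norm_of_nonneg ha, Real.norm_of_nonneg hb]
    have h2 : ⟪a • X + b • Y, y⟫_ℝ = a * ⟪X, y⟫_ℝ + b * ⟪Y, y⟫_ℝ := by
      rw [inner_add_left, real_inner_smul_left, real_inner_smul_left]
    refine aux_ofReal_combo ha hb hab ?_ (hmemB hX y hy) (hmemB hY y hy)
    rw [h2]; ring_nf; nlinarith
  -- Strict convexity of B
  have hkey : ∀ Z ∈ B, ∀ u : ℝ, 0 ≤ u → u < 1 → u • Z ∈ interior B := by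
    intro Z hZ u hu0 hu1
    have := hconv.combo_interior_closure_mem_interior h0 (subset_closure hZ)
      (by linarith : (0:ℝ) < 1 - u) hu0 (by ring)
    simpa using this
  have hsc : StrictConvex ℝ B := by
    intro X hX Y hY hXY a b ha hb hab
    by_cases hray : SameRay ℝ X Y
    · rcases eq_or_ne X 0 with rfl | hX0
      · have : a • (0 : E n) + b • Y = b • Y := by simp
        rw [this]
        exact hkey Y hY b hb.le (by linarith)
      rcases eq_or_ne Y 0 with rfl | hY0
      · have : a • X + b • (0 : E n) = a • X := by simp
        rw [this]
        exact hkey X hX a ha.le (by linarith)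
      obtain ⟨r, s, hr, hs, hrs⟩ := hray.exists_pos hX0 hY0
      have hYX : Y = (s⁻¹ * r) • X := by
        rw [mul_smul, hrs, inv_smul_smul₀ hs.ne']
      set t : ℝ := s⁻¹ * r with ht
      have ht0 : 0 < t := by positivity
      have ht1 : t ≠ 1 := by
        intro h; apply hXY; rw [hYX, h, one_smul]
      rcases lt_or_gt_of_ne ht1 with htlt | htgt
      · have hcombo : a • X + b • Y = (a + b * t) • X := by
          rw [hYX, smul_smul, ← add_smul]
        rw [hcombo]
        refine hkey X hX _ (by positivity) ?_
        nlinarith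
      · have hXY' : X = t⁻¹ • Y := by rw [hYX, inv_smul_smul₀ ht0.ne']
        have hcombo : a • X + b • Y = (a * t⁻¹ + b) • Y := by
          rw [hXY', smul_smul, ← add_smul]
        rw [hcombo]
        have hti : t⁻¹ < 1 := by
          rw [inv_lt_one_iff₀]; right; exact htgt
        refine hkey Y hY _ (by positivity) ?_
        nlinarith
    · -- strict triangle inequality case
      have hns : ¬ SameRay ℝ (a • X) (b • Y) := by
        intro h
        have h1 : SameRay ℝ X (b • Y) := by
          have := h.pos_smul_left (show (0:ℝ) < a⁻¹ by positivity)
          rwa [inv_smul_smul₀ ha.ne'] at this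
        have h2 : SameRay ℝ X Y := by
          have := h1.pos_smul_right (show (0:ℝ) < b⁻¹ by positivity)
          rwa [inv_smul_smul₀ hb.ne'] at this
        exact hray h2
      have hlt : ‖a • X + b • Y‖ < a * ‖X‖ + b * ‖Y‖ := by
        have := not_sameRay_iff_norm_add_lt.1 hns
        rwa [norm_smul, norm_smul, Real.norm_of_nonneg ha.le, Real.norm_of_nonneg hb.le] at this
      set M : E n := a • X + b • Y with hM
      set δ : ℝ := a * ‖X‖ + b * ‖Y‖ - ‖M‖ with hδ
      have hδ0 : 0 < δ := by simp only [hδ]; linarith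
      refine mem_interior.2 ⟨ball M (δ / 2), ?_, isOpen_ball, mem_ball_self (by positivity)⟩
      intro Z hZ
      rw [mem_ball, dist_eq_norm] at hZ
      rw [hrep]; intro y hy
      have hZn : ‖Z‖ ≤ ‖M‖ + ‖Z - M‖ := by
        calc ‖Z‖ = ‖M + (Z - M)‖ := by rw [add_sub_cancel]
          _ ≤ ‖M‖ + ‖Z - M‖ := norm_add_le _ _
      have hZi : ⟪M, y⟫_ℝ - ‖Z - M‖ ≤ ⟪Z, y⟫_ℝ := by
        have h1 : ⟪M - Z, y⟫_ℝ ≤ ‖M - Z‖ * ‖y‖ := real_inner_le_norm _ _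
        rw [hy1 hy, mul_one] at h1
        have h2 : ‖M - Z‖ = ‖Z - M‖ := norm_sub_rev _ _
        have h3 : ⟪M - Z, y⟫_ℝ = ⟪M, y⟫_ℝ - ⟪Z, y⟫_ℝ := inner_sub_left _ _ _
        linarith
      have hMi : ⟪M, y⟫_ℝ = a * ⟪X, y⟫_ℝ + b * ⟪Y, y⟫_ℝ := by
        rw [hM, inner_add_left, real_inner_smul_left, real_inner_smul_left]
      refine aux_ofReal_combo ha.le hb.le hab ?_ (hmemB hX y hy) (hmemB hY y hy)
      have : ‖Z‖ - ⟪Z, y⟫_ℝ ≤ ‖M‖ - ⟪M, y⟫_ℝ + 2 * ‖Z - M‖ := by linarith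
      have hMn : ‖M‖ = a * ‖X‖ + b * ‖Y‖ - δ := by simp [hδ]
      nlinarith [hZ]
  -- argmax selection
  have hcont : ∀ U : E n, Continuous fun X : E n => ⟪X, U⟫_ℝ :=
    fun U => continuous_id.inner continuous_const
  have hex : ∀ U : E n, ∃ X, X ∈ B ∧ ∀ Z ∈ B, ⟪Z, U⟫_ℝ ≤ ⟪X, U⟫_ℝ := by
    intro U
    obtain ⟨X, hXB, hXmax⟩ := hc.exists_isMaxOn hne (hcont U).continuousOn
    exact ⟨X, hXB, fun Z hZ => hXmax hZ⟩
  choose Xm hXmB hXmax using hex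
  have hval : ∀ U : E n, suppFn n B U = ⟪Xm U, U⟫_ℝ := by
    intro U
    apply le_antisymm
    · apply csSup_le (hne.image _)
      rintro v ⟨Z, hZ, rfl⟩; exact hXmax U Z hZ
    · apply le_csSup
      · refine ⟨R * ‖U‖, ?_⟩
        rintro v ⟨Z, hZ, rfl⟩
        calc ⟪Z, U⟫_ℝ ≤ ‖Z‖ * ‖U‖ := real_inner_le_norm _ _
          _ ≤ R * ‖U‖ := mul_le_mul_of_nonneg_right (hR Z hZ) (norm_nonneg _)
      · exact ⟨Xm U, hXmB U, rfl⟩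
  -- interior points in direction U
  have hdir : ∀ (U : E n), U ≠ 0 → ∀ (M : E n), M ∈ interior B →
      ∃ W ∈ B, ⟪M, U⟫_ℝ < ⟪W, U⟫_ℝ := by
    intro U hU M hM
    obtain ⟨ε, hε, hball⟩ := Metric.mem_nhds_iff.1 (mem_interior_iff_mem_nhds.1 hM)
    have hU0 : (0:ℝ) < ‖U‖ := norm_pos_iff.2 hU
    refine ⟨M + (ε / 2) • ‖U‖⁻¹ • U, ?_, ?_⟩
    · apply hball
      rw [mem_ball, dist_eq_norm]
      have : ‖M + (ε / 2) • ‖U‖⁻¹ • U - M‖ = ε / 2 := by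
        rw [add_sub_cancel_left, norm_smul, norm_smul, Real.norm_of_nonneg (by positivity),
          Real.norm_of_nonneg (by positivity)]
        field_simp
      rw [this]; linarith
    · rw [inner_add_left, real_inner_smul_left, real_inner_smul_left,
        real_inner_self_eq_norm_sq]
      have : (ε / 2) * (‖U‖⁻¹ * ‖U‖ ^ 2) = (ε / 2) * ‖U‖ := by
        field_simp
      rw [this]
      nlinarith
  -- positivity
  have hpos : ∀ U : E n, U ≠ 0 → 0 < suppFn n B U := by
    intro U hU
    obtain ⟨W, hWB, hW⟩ := hdir U hU 0 h0
    rw [hval U]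
    have : ⟪W, U⟫_ℝ ≤ ⟪Xm U, U⟫_ℝ := hXmax U W hWB
    simp only [inner_zero_left] at hW
    linarith
  -- uniqueness of the maximizer
  have huniq : ∀ U : E n, U ≠ 0 → ∀ Z ∈ B, ⟪Z, U⟫_ℝ = ⟪Xm U, U⟫_ℝ → Z = Xm U := by
    intro U hU Z hZ hZval
    by_contra hne'
    have hmid : (1/2 : ℝ) • Z + (1/2 : ℝ) • (Xm U) ∈ interior B :=
      hsc hZ (hXmB U) hne' (by norm_num) (by norm_num) (by norm_num)
    obtain ⟨W, hWB, hW⟩ := hdir U hU _ hmid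
    rw [inner_add_left, real_inner_smul_left, real_inner_smul_left, hZval] at hW
    have : ⟪W, U⟫_ℝ ≤ ⟪Xm U, U⟫_ℝ := hXmax U W hWB
    linarith
  -- continuity of the maximizer away from 0
  have hXcont : ∀ U : E n, U ≠ 0 → ∀ ε > (0:ℝ), ∃ δ > (0:ℝ),
      ∀ V : E n, ‖V - U‖ < δ → ‖Xm V - Xm U‖ < ε := by
    intro U hU ε hε
    set K : Set (E n) := B ∩ {Z | ε ≤ ‖Z - Xm U‖} with hK
    rcases eq_empty_or_nonempty K with hKe | hKne
    · refine ⟨1, one_pos, fun V hV => ?_⟩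
      by_contra hcon
      push_neg at hcon
      have : Xm V ∈ K := ⟨hXmB V, hcon⟩
      rw [hKe] at this; exact this
    · have hKc : IsCompact K := hc.inter_right
        (isClosed_le continuous_const ((continuous_id.sub continuous_const).norm))
      obtain ⟨W, hWK, hWmax⟩ := hKc.exists_isMaxOn hKne (hcont U).continuousOn
      have hWne : W ≠ Xm U := by
        intro h
        have := hWK.2
        rw [h] at this
        simp only [mem_setOf_eq, sub_self, norm_zero] at this
        linarith
      have hWlt : ⟪W, U⟫_ℝ < ⟪Xm U, U⟫_ℝ := by
        rcases lt_or_eq_of_le (hXmax U W hWK.1) with h | h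
        · exact h
        · exact absurd (huniq U hU W hWK.1 h) hWne
      set η : ℝ := ⟪Xm U, U⟫_ℝ - ⟪W, U⟫_ℝ with hη
      have hη0 : 0 < η := by simp only [hη]; linarith
      refine ⟨η / (2 * (R + 1)), by positivity, fun V hV => ?_⟩
      by_contra hcon
      push_neg at hcon
      have hXVK : Xm V ∈ K := ⟨hXmB V, hcon⟩
      -- upper bound for suppFn V
      have hub : ⟪Xm V, V⟫_ℝ ≤ ⟪Xm U, U⟫_ℝ - η + R * ‖V - U‖ := by
        have h1 : ⟪Xm V, U⟫_ℝ ≤ ⟪W, U⟫_ℝ := hWmax hXVK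
        have h2 : ⟪Xm V, V - U⟫_ℝ ≤ R * ‖V - U‖ := by
          calc ⟪Xm V, V - U⟫_ℝ ≤ ‖Xm V‖ * ‖V - U‖ := real_inner_le_norm _ _
            _ ≤ R * ‖V - U‖ :=
              mul_le_mul_of_nonneg_right (hR _ (hXmB V)) (norm_nonneg _)
        have h3 : ⟪Xm V, V⟫_ℝ = ⟪Xm V, U⟫_ℝ + ⟪Xm V, V - U⟫_ℝ := by
          rw [← inner_add_right]; congr 1; abel
        simp only [hη]; linarith
      -- lower bound for suppFn V
      have hlb : ⟪Xm U, U⟫_ℝ - R * ‖V - U‖ ≤ ⟪Xm V, V⟫_ℝ := by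
        have h1 : ⟪Xm U, V⟫_ℝ ≤ ⟪Xm V, V⟫_ℝ := hXmax V _ (hXmB U)
        have h2 : -(R * ‖V - U‖) ≤ ⟪Xm U, V - U⟫_ℝ := by
          have : ⟪Xm U, U - V⟫_ℝ ≤ ‖Xm U‖ * ‖U - V‖ := real_inner_le_norm _ _
          have h4 : ‖Xm U‖ * ‖U - V‖ ≤ R * ‖V - U‖ := by
            rw [norm_sub_rev]
            exact mul_le_mul_of_nonneg_right (hR _ (hXmB U)) (norm_nonneg _)
          have h5 : ⟪Xm U, U - V⟫_ℝ = -⟪Xm U, V - U⟫_ℝ := by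
            rw [← inner_neg_right]; congr 1; abel
          linarith
        have h3 : ⟪Xm U, V⟫_ℝ = ⟪Xm U, U⟫_ℝ + ⟪Xm U, V - U⟫_ℝ := by
          rw [← inner_add_right]; congr 1; abel
        linarith
      have hsmall : R * ‖V - U‖ < η / 2 := by
        have h1 : R * ‖V - U‖ ≤ (R + 1) * ‖V - U‖ :=
          mul_le_mul_of_nonneg_right (by linarith) (norm_nonneg _)
        have h2 : (R + 1) * ‖V - U‖ < (R + 1) * (η / (2 * (R + 1))) := by
          apply mul_lt_mul_of_pos_left hV (by linarith)
        have h3 : (R + 1) * (η / (2 * (R + 1))) = η / 2 := by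
          field_simp
        linarith
      linarith
  -- differentiability
  have hderiv : ∀ U : E n, U ≠ 0 →
      HasFDerivAt (suppFn n B) (innerSL ℝ (Xm U)) U := by
    intro U hU
    rw [hasFDerivAt_iff_isLittleO_nhds_zero]
    rw [Asymptotics.isLittleO_iff]
    intro c hc'
    obtain ⟨δ, hδ0, hδ⟩ := hXcont U hU c hc'
    filter_upwards [Metric.ball_mem_nhds (0 : E n) hδ0] with V hV
    rw [mem_ball, dist_eq_norm, sub_zero] at hV
    have hδV : ‖Xm (U + V) - Xm U‖ < c := hδ (U + V) (by simpa using hV)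
    have hlow : 0 ≤ suppFn n B (U + V) - suppFn n B U - ⟪Xm U, V⟫_ℝ := by
      rw [hval (U + V), hval U]
      have h1 : ⟪Xm U, U + V⟫_ℝ ≤ ⟪Xm (U + V), U + V⟫_ℝ := hXmax _ _ (hXmB U)
      have h2 : ⟪Xm U, U + V⟫_ℝ = ⟪Xm U, U⟫_ℝ + ⟪Xm U, V⟫_ℝ := inner_add_right _ _ _
      linarith
    have hupp : suppFn n B (U + V) - suppFn n B U - ⟪Xm U, V⟫_ℝ ≤ c * ‖V‖ := by
      rw [hval (U + V), hval U]
      have h1 : ⟪Xm (U + V), U⟫_ℝ ≤ ⟪Xm U, U⟫_ℝ := hXmax _ _ (hXmB (U + V))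
      have h2 : ⟪Xm (U + V), U + V⟫_ℝ = ⟪Xm (U + V), U⟫_ℝ + ⟪Xm (U + V), V⟫_ℝ :=
        inner_add_right _ _ _
      have h3 : ⟪Xm (U + V) - Xm U, V⟫_ℝ ≤ c * ‖V‖ := by
        calc ⟪Xm (U + V) - Xm U, V⟫_ℝ ≤ ‖Xm (U + V) - Xm U‖ * ‖V‖ := real_inner_le_norm _ _
          _ ≤ c * ‖V‖ := mul_le_mul_of_nonneg_right hδV.le (norm_nonneg _)
      have h4 : ⟪Xm (U + V) - Xm U, V⟫_ℝ = ⟪Xm (U + V), V⟫_ℝ - ⟪Xm U, V⟫_ℝ :=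
        inner_sub_left _ _ _
      linarith
    have : ‖suppFn n B (U + V) - suppFn n B U - (innerSL ℝ (Xm U)) V‖ ≤ c * ‖V‖ := by
      simp only [innerSL_apply_apply]
      rw [Real.norm_eq_abs, abs_le]
      constructor
      · have : (0:ℝ) ≤ c * ‖V‖ := by positivity
        linarith
      · linarith
    simpa using this
  have hopen : IsOpen ({(0 : E n)}ᶜ : Set (E n)) := isClosed_singleton.isOpen_compl
  have hdiff : DifferentiableOn ℝ (suppFn n B) {(0 : E n)}ᶜ := by
    intro U hU
    exact ((hderiv U hU).differentiableAt).differentiableWithinAt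
  have hfderiv_eq : ∀ U : E n, U ≠ 0 →
      fderiv ℝ (suppFn n B) U = innerSL ℝ (Xm U) := fun U hU => (hderiv U hU).fderiv
  have hXmcont : ContinuousOn Xm {(0 : E n)}ᶜ := by
    intro U hU
    apply ContinuousAt.continuousWithinAt
    rw [Metric.continuousAt_iff]
    intro ε hε
    obtain ⟨δ, hδ0, hδ⟩ := hXcont U hU ε hε
    exact ⟨δ, hδ0, fun {V} hV => by
      rw [dist_eq_norm] at hV ⊢
      exact hδ V hV⟩
  refine ⟨hpos, ?_⟩
  rw [show (1 : WithTop ℕ∞) = 0 + 1 from rfl, contDiffOn_succ_iff_fderiv_of_isOpen hopen]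
  refine ⟨hdiff, by simp, ?_⟩
  rw [contDiffOn_zero]
  apply ContinuousOn.congr (f := fun U => (innerSL ℝ (Xm U) : E n →L[ℝ] ℝ))
  · exact (innerSL ℝ (E := E n)).continuous.comp_continuousOn hXmcont
  · intro U hU
    exact hfderiv_eq U hU
end
end

section
/- Let R = ∂B be a nondegenerate convex reflector with focal function p, and let D(R) be its directrix. Then D(R) = ∂𝓓, where 𝓓 = {Z ∈ ℝ^{n+1} : ⟨Z,−y⟩ ≤ p(y) for all y ∈ Sⁿ} is a compact convex body containing the origin in its interior; consequently D(R) is a closed convex hypersurface, and the support function H of 𝓓 satisfies H(−y) = p(y) for all y ∈ Sⁿ. -/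
open scoped InnerProductSpace ENNReal
open Metric Set

noncomputable section

set_option maxHeartbeats 1000000

namespace Stmt15aux

variable {n : ℕ} {B : Set (E n)}

lemma cont_f (y : E n) : Continuous fun X : E n => ‖X‖ - ⟪X, y⟫_ℝ :=
  continuous_norm.sub (continuous_id.inner continuous_const)

lemma focal_ge (hBc : IsCompact B) {X : E n} (hX : X ∈ B) (y : E n) :
    ‖X‖ - ⟪X, y⟫_ℝ ≤ focal n B y :=
  le_csSup ((hBc.image (cont_f y)).bddAbove) ⟨X, hX, rfl⟩

lemma focal_le (hne : B.Nonempty) {y : E n} {c : ℝ}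
    (h : ∀ X ∈ B, ‖X‖ - ⟪X, y⟫_ℝ ≤ c) : focal n B y ≤ c :=
  csSup_le (hne.image _) (by rintro v ⟨X, hX, rfl⟩; exact h X hX)

lemma exists_focal_max (hBc : IsCompact B) (hne : B.Nonempty) (y : E n) :
    ∃ X ∈ B, ‖X‖ - ⟪X, y⟫_ℝ = focal n B y := by
  obtain ⟨X, hX, hmax⟩ := hBc.exists_isMaxOn hne (cont_f y).continuousOn
  exact ⟨X, hX, le_antisymm (focal_ge hBc hX y) (focal_le hne hmax)⟩

lemma inner_directrix (X y y' : E n) :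
    ⟪X - ‖X‖ • y, -y'⟫_ℝ = ‖X‖ * ⟪y, y'⟫_ℝ - ⟪X, y'⟫_ℝ := by
  simp only [inner_sub_left, inner_neg_right, real_inner_smul_left]
  ring

end Stmt15aux

namespace Stmt15aux2
open Stmt15aux
variable {n : ℕ} {B : Set (E n)}

lemma mem_B_iff (hB : IsReflectorBody n B) {X : E n} :
    X ∈ B ↔ ∀ y ∈ sph n, ‖X‖ - ⟪X, y⟫_ℝ ≤ focal n B y := by
  obtain ⟨hBc, h0, pt, hpt, hBeq⟩ := hB
  have hne : B.Nonempty := ⟨0, interior_subset h0⟩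
  constructor
  · exact fun hX y _ => focal_ge hBc hX y
  · intro h
    rw [hBeq]
    intro y hy
    obtain ⟨X', hX', hfX'⟩ := exists_focal_max hBc hne y
    have h1 : ENNReal.ofReal (‖X‖ - ⟪X, y⟫_ℝ) ≤ ENNReal.ofReal (‖X'‖ - ⟪X', y⟫_ℝ) :=
      ENNReal.ofReal_le_ofReal (by rw [hfX']; exact h y hy)
    have h2 : ENNReal.ofReal (‖X'‖ - ⟪X', y⟫_ℝ) ≤ pt y := by
      have := hBeq ▸ hX'
      exact this y hy
    exact h1.trans h2

/-- a bound on norms of elements of B -/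
lemma exists_bound (hBc : IsCompact B) : ∃ M : ℝ, 0 ≤ M ∧ ∀ X ∈ B, ‖X‖ ≤ M := by
  obtain ⟨r, hr⟩ := hBc.isBounded.subset_closedBall 0
  exact ⟨max r 0, le_max_right _ _, fun X hX => by
    have := hr hX
    rw [Metric.mem_closedBall, dist_zero_right] at this
    exact this.trans (le_max_left _ _)⟩

lemma focal_pos (hB : IsReflectorBody n B) :
    ∃ ε > 0, ∀ y ∈ sph n, ε ≤ focal n B y := by
  obtain ⟨hBc, h0, _⟩ := hB
  obtain ⟨ε, hε, hball⟩ := Metric.mem_nhds_iff.1 (mem_interior_iff_mem_nhds.1 h0)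
  refine ⟨ε / 2 + ε / 4, by positivity, fun y hy => ?_⟩
  have hy1 : ‖y‖ = 1 := mem_sphere_zero_iff_norm.1 hy
  have hXmem : -((ε / 2) • y) ∈ B := by
    apply hball
    rw [Metric.mem_ball, dist_zero_right, norm_neg, norm_smul, hy1]
    simp only [mul_one, Real.norm_eq_abs]
    rw [abs_of_pos (by positivity)]
    linarith
  have := focal_ge hBc hXmem y
  rw [norm_neg, norm_smul, hy1, inner_neg_left, real_inner_smul_left,
    real_inner_self_eq_norm_sq, hy1] at this
  simp only [Real.norm_eq_abs, mul_one, one_pow] at this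
  rw [abs_of_pos (by positivity)] at this
  linarith

lemma focal_lipschitz (hBc : IsCompact B) (hne : B.Nonempty) {M : ℝ}
    (hM : ∀ X ∈ B, ‖X‖ ≤ M) (y₁ y₂ : E n) :
    focal n B y₁ ≤ focal n B y₂ + M * ‖y₁ - y₂‖ := by
  apply focal_le hne
  intro X hX
  have h1 : ‖X‖ - ⟪X, y₂⟫_ℝ ≤ focal n B y₂ := focal_ge hBc hX y₂
  have h2 : ⟪X, y₂ - y₁⟫_ℝ ≤ M * ‖y₁ - y₂‖ := by
    calc ⟪X, y₂ - y₁⟫_ℝ ≤ ‖X‖ * ‖y₂ - y₁‖ := real_inner_le_norm _ _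
    _ ≤ M * ‖y₁ - y₂‖ := by
        rw [norm_sub_rev]
        exact mul_le_mul_of_nonneg_right (hM X hX) (norm_nonneg _)
  have : ‖X‖ - ⟪X, y₁⟫_ℝ = (‖X‖ - ⟪X, y₂⟫_ℝ) + ⟪X, y₂ - y₁⟫_ℝ := by
    rw [inner_sub_right]; ring
  linarith

lemma focal_continuous (hBc : IsCompact B) (hne : B.Nonempty) :
    Continuous (focal n B) := by
  obtain ⟨M, hM0, hM⟩ := exists_bound hBc
  have : LipschitzWith (Real.toNNReal M) (focal n B) := by
    apply LipschitzWith.of_dist_le_mul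
    intro y₁ y₂
    rw [Real.dist_eq, Real.coe_toNNReal M hM0, dist_eq_norm]
    rw [abs_sub_le_iff]
    constructor
    · have := focal_lipschitz hBc hne hM y₁ y₂; linarith
    · have := focal_lipschitz hBc hne hM y₂ y₁
      rw [norm_sub_rev] at this; linarith
  exact this.continuous

end Stmt15aux2
namespace Stmt15aux3
open Stmt15aux Stmt15aux2

variable {n : ℕ} {B : Set (E n)}

def Dset (n : ℕ) (B : Set (E n)) : Set (E n) :=
  {Z : E n | ∀ y ∈ sph n, ⟪Z, -y⟫_ℝ ≤ focal n B y}

lemma isClosed_Dset : IsClosed (Dset n B) := by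
  have : Dset n B = ⋂ y ∈ sph n, {Z : E n | ⟪Z, -y⟫_ℝ ≤ focal n B y} := by
    ext Z; simp [Dset, Set.mem_iInter]
  rw [this]
  exact isClosed_biInter fun y _ =>
    isClosed_le (Continuous.inner continuous_id continuous_const) continuous_const

lemma convex_Dset : Convex ℝ (Dset n B) := by
  have : Dset n B = ⋂ y ∈ sph n, {Z : E n | ⟪Z, -y⟫_ℝ ≤ focal n B y} := by
    ext Z; simp [Dset, Set.mem_iInter]
  rw [this]
  refine convex_iInter fun y => convex_iInter fun _ => ?_
  intro Z₁ h1 Z₂ h2 a b ha hb hab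
  simp only [mem_setOf_eq] at h1 h2 ⊢
  rw [inner_add_left, real_inner_smul_left, real_inner_smul_left]
  have h3 : a * focal n B y + b * focal n B y = focal n B y := by
    rw [← add_mul, hab, one_mul]
  linarith [mul_le_mul_of_nonneg_left h1 ha, mul_le_mul_of_nonneg_left h2 hb]

lemma sphere_nonempty' : (sph n).Nonempty := by
  exact NormedSpace.sphere_nonempty.2 zero_le_one

lemma isCompact_Dset (hB : IsReflectorBody n B) : IsCompact (Dset n B) := by
  obtain ⟨hBc, h0, _⟩ := hB
  have hne : B.Nonempty := ⟨0, interior_subset h0⟩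
  obtain ⟨M, hM0, hM⟩ := exists_bound hBc
  have hsub : Dset n B ⊆ Metric.closedBall 0 (2 * M) := by
    intro Z hZ
    rw [Metric.mem_closedBall, dist_zero_right]
    rcases eq_or_ne Z 0 with rfl | hZ0
    · simp; positivity
    · set y : E n := -(‖Z‖⁻¹ • Z) with hy
      have hy1 : y ∈ sph n := by
        rw [sph, mem_sphere_zero_iff_norm, norm_neg, norm_smul, norm_inv, norm_norm,
          inv_mul_cancel₀ (norm_ne_zero_iff.2 hZ0)]
      have h1 := hZ y hy1
      have h2 : ⟪Z, -y⟫_ℝ = ‖Z‖ := by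
        rw [hy, neg_neg, real_inner_smul_right, real_inner_self_eq_norm_sq, sq,
          inv_mul_cancel_left₀ (norm_ne_zero_iff.2 hZ0)]
      have h3 : focal n B y ≤ 2 * M := by
        apply focal_le hne
        intro X hX
        have hl : -⟪X, y⟫_ℝ ≤ ‖X‖ := by
          have := abs_real_inner_le_norm X y
          have hy1' : ‖y‖ = 1 := mem_sphere_zero_iff_norm.1 hy1
          rw [hy1', mul_one] at this
          cases abs_le.1 this; linarith
        have := hM X hX
        linarith
      linarith [h2 ▸ h1]
  exact (isCompact_closedBall (0 : E n) (2 * M)).of_isClosed_subset isClosed_Dset hsub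

lemma zero_interior_Dset (hB : IsReflectorBody n B) : (0 : E n) ∈ interior (Dset n B) := by
  obtain ⟨ε, hε, hεle⟩ := focal_pos hB
  rw [mem_interior]
  refine ⟨Metric.ball 0 ε, ?_, Metric.isOpen_ball, Metric.mem_ball_self hε⟩
  intro Z hZ
  rw [Metric.mem_ball, dist_zero_right] at hZ
  intro y hy
  have hy1 : ‖y‖ = 1 := mem_sphere_zero_iff_norm.1 hy
  calc ⟪Z, -y⟫_ℝ ≤ ‖Z‖ * ‖-y‖ := real_inner_le_norm _ _
  _ = ‖Z‖ := by rw [norm_neg, hy1, mul_one]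
  _ ≤ focal n B y := le_of_lt (lt_of_lt_of_le hZ (hεle y hy))

/-- membership of a "directrix-type" point in Dset -/
lemma directrix_pt_mem (hBc : IsCompact B) {X y : E n} (hX : X ∈ B) (hy : y ∈ sph n) :
    X - ‖X‖ • y ∈ Dset n B := by
  intro y' hy'
  rw [inner_directrix]
  have h1 : ⟪y, y'⟫_ℝ ≤ 1 := by
    have := real_inner_le_norm y y'
    rw [mem_sphere_zero_iff_norm.1 hy, mem_sphere_zero_iff_norm.1 hy'] at this
    linarith
  have h2 : ‖X‖ * ⟪y, y'⟫_ℝ ≤ ‖X‖ := by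
    nlinarith [norm_nonneg X]
  have := focal_ge hBc hX y'
  linarith

lemma directrix_pt_inner {X y : E n} (hy : y ∈ sph n) :
    ⟪X - ‖X‖ • y, -y⟫_ℝ = ‖X‖ - ⟪X, y⟫_ℝ := by
  rw [inner_directrix]
  have : ⟪y, y⟫_ℝ = 1 := by
    rw [real_inner_self_eq_norm_sq, mem_sphere_zero_iff_norm.1 hy]; norm_num
  rw [this, mul_one]

/-- A point of Dset where some constraint is active is on the frontier. -/
lemma active_mem_frontier {Z y : E n} (hZ : Z ∈ Dset n B) (hy : y ∈ sph n)
    (hact : ⟪Z, -y⟫_ℝ = focal n B y) : Z ∈ frontier (Dset n B) := by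
  rw [frontier, isClosed_Dset.closure_eq]
  refine ⟨hZ, fun hint => ?_⟩
  obtain ⟨δ, hδ, hball⟩ := Metric.mem_nhds_iff.1 (mem_interior_iff_mem_nhds.1 hint)
  have hy1 : ‖y‖ = 1 := mem_sphere_zero_iff_norm.1 hy
  have hmem : Z - (δ / 2) • y ∈ Dset n B := by
    apply hball
    rw [Metric.mem_ball, dist_eq_norm]
    simp only [sub_sub_cancel_left, norm_neg, norm_smul, hy1, mul_one, Real.norm_eq_abs]
    rw [abs_of_pos (by positivity)]; linarith
  have := hmem y hy
  have hyy : ⟪y, y⟫_ℝ = 1 := by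
    rw [real_inner_self_eq_norm_sq, hy1]; norm_num
  simp only [inner_sub_left, real_inner_smul_left, inner_neg_right, hyy] at this hact
  linarith

end Stmt15aux3
set_option maxHeartbeats 1000000

namespace Stmt15aux4
open Stmt15aux Stmt15aux2 Stmt15aux3

variable {n : ℕ} {B : Set (E n)}

lemma le_of_sq_le_sq {a b : ℝ} (h : a ^ 2 ≤ b ^ 2) (hb : 0 ≤ b) : a ≤ b := by
  nlinarith

lemma eq_of_sq_eq_sq {a b : ℝ} (ha : 0 ≤ a) (hb : 0 ≤ b) (h : a ^ 2 = b ^ 2) : a = b :=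
  le_antisymm (le_of_sq_le_sq h.le hb) (le_of_sq_le_sq h.ge ha)

/-- norm expansion bound: `‖y + w‖ ≤ 1 + ⟪y,w⟫ + ‖w‖²/2` for unit `y`. -/
lemma norm_add_le_quad {y w : E n} (hy : ‖y‖ = 1) :
    ‖y + w‖ ≤ 1 + ⟪y, w⟫_ℝ + ‖w‖ ^ 2 / 2 := by
  have hsq : ‖y + w‖ ^ 2 = 1 + 2 * ⟪y, w⟫_ℝ + ‖w‖ ^ 2 := by
    rw [@norm_add_sq_real, hy]; ring
  have hcs : |⟪y, w⟫_ℝ| ≤ ‖w‖ := by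
    have := abs_real_inner_le_norm y w
    rwa [hy, one_mul] at this
  have h1 : 0 ≤ 1 + ⟪y, w⟫_ℝ + ‖w‖ ^ 2 / 2 := by
    have := abs_le.1 hcs
    nlinarith [sq_nonneg (‖w‖ - 1)]
  apply le_of_sq_le_sq _ h1
  rw [hsq]; nlinarith [sq_nonneg (⟪y, w⟫_ℝ + ‖w‖ ^ 2 / 2)]

lemma exists_active (hB : IsReflectorBody n B) {Z : E n} (hZ : Z ∈ Dset n B)
    (hni : Z ∉ interior (Dset n B)) : ∃ y ∈ sph n, ⟪Z, -y⟫_ℝ = focal n B y := by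
  obtain ⟨hBc, h0, _⟩ := hB
  have hne : B.Nonempty := ⟨0, interior_subset h0⟩
  by_contra hcon
  push_neg at hcon
  have hcont : ContinuousOn (fun y : E n => focal n B y - ⟪Z, -y⟫_ℝ) (sph n) :=
    ((focal_continuous hBc hne).sub
      (Continuous.inner continuous_const continuous_neg)).continuousOn
  have hsphcpt : IsCompact (sph n) := isCompact_sphere 0 1
  obtain ⟨y₀, hy₀, hmin⟩ := hsphcpt.exists_isMinOn sphere_nonempty' hcont
  set δ := focal n B y₀ - ⟪Z, -y₀⟫_ℝ with hδdef
  have hδpos : 0 < δ := lt_of_le_of_ne (by have := hZ y₀ hy₀; linarith)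
    (fun h => hcon y₀ hy₀ (by linarith [h.symm]))
  apply hni
  rw [mem_interior]
  refine ⟨Metric.ball Z δ, fun Z' hZ' => ?_, Metric.isOpen_ball, Metric.mem_ball_self hδpos⟩
  intro y hy
  have h1 : δ ≤ focal n B y - ⟪Z, -y⟫_ℝ := hmin hy
  have h2 : ⟪Z' - Z, -y⟫_ℝ ≤ ‖Z' - Z‖ := by
    calc ⟪Z' - Z, -y⟫_ℝ ≤ ‖Z' - Z‖ * ‖-y‖ := real_inner_le_norm _ _
    _ = ‖Z' - Z‖ := by rw [norm_neg, mem_sphere_zero_iff_norm.1 hy, mul_one]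
  have h3 : ‖Z' - Z‖ < δ := by rwa [Metric.mem_ball, dist_eq_norm] at hZ'
  have h4 : ⟪Z', -y⟫_ℝ = ⟪Z, -y⟫_ℝ + ⟪Z' - Z, -y⟫_ℝ := by
    rw [← inner_add_left]; congr 1; abel
  linarith

/-- The Danskin-type step: an active point lies in the closed convex hull of
the directrix points for that direction. -/
lemma mem_hull_of_active (hB : IsReflectorBody n B) {Z y : E n} (hy : y ∈ sph n)
    (hZ : Z ∈ Dset n B) (hact : ⟪Z, -y⟫_ℝ = focal n B y) :
    Z ∈ closure (convexHull ℝ ((fun X => X - ‖X‖ • y) ''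
      {X | X ∈ B ∧ ‖X‖ - ⟪X, y⟫_ℝ = focal n B y})) := by
  obtain ⟨hBc, h0, hrest⟩ := hB
  have hne : B.Nonempty := ⟨0, interior_subset h0⟩
  have hy1 : ‖y‖ = 1 := mem_sphere_zero_iff_norm.1 hy
  obtain ⟨M, hM0, hM⟩ := exists_bound hBc
  set p : ℝ := focal n B y with hp
  set A : Set (E n) := {X | X ∈ B ∧ ‖X‖ - ⟪X, y⟫_ℝ = p} with hA
  set G : Set (E n) := (fun X => X - ‖X‖ • y) '' A with hG
  by_contra hZK
  have hKconv : Convex ℝ (closure (convexHull ℝ G)) := (convex_convexHull ℝ G).closure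
  obtain ⟨f, u, hfa, hfZ⟩ := geometric_hahn_banach_closed_point hKconv isClosed_closure hZK
  set V : E n := (InnerProductSpace.toDual ℝ (E n)).symm f with hVdef
  have hV : ∀ x : E n, ⟪V, x⟫_ℝ = f x := fun x => InnerProductSpace.toDual_symm_apply
  set γ : E n → ℝ := fun X => ⟪X - ‖X‖ • y, V⟫_ℝ with hγ
  have hγcont : Continuous γ :=
    ((continuous_id.sub (continuous_norm.smul continuous_const)).inner continuous_const)
  have hγA : ∀ X ∈ A, γ X < u := by
    intro X hXA
    have hmem : X - ‖X‖ • y ∈ closure (convexHull ℝ G) :=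
      subset_closure (subset_convexHull ℝ G ⟨X, hXA, rfl⟩)
    have := hfa _ hmem
    rwa [← hV, real_inner_comm] at this
  have hγbd : ∀ X ∈ B, γ X ≤ 2 * M * ‖V‖ := by
    intro X hX
    calc γ X ≤ ‖X - ‖X‖ • y‖ * ‖V‖ := real_inner_le_norm _ _
    _ ≤ 2 * M * ‖V‖ := by
        apply mul_le_mul_of_nonneg_right _ (norm_nonneg V)
        calc ‖X - ‖X‖ • y‖ ≤ ‖X‖ + ‖‖X‖ • y‖ := norm_sub_le _ _
        _ = 2 * ‖X‖ := by
            rw [norm_smul, hy1, mul_one, Real.norm_eq_abs, abs_of_nonneg (norm_nonneg X)]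
            ring
        _ ≤ 2 * M := by linarith [hM X hX]
  -- the compact set of "near-maximizers" bound
  have hAne : A.Nonempty := by
    obtain ⟨X, hX, hfX⟩ := exists_focal_max hBc hne y
    exact ⟨X, hX, hfX⟩
  have hfB : ∀ X ∈ B, ‖X‖ - ⟪X, y⟫_ℝ ≤ p := fun X hX => focal_ge hBc hX y
  -- m₀ : bound for f on the region where γ ≥ u
  have hm₀ : ∃ m₀ < p, ∀ X ∈ B, u ≤ γ X → ‖X‖ - ⟪X, y⟫_ℝ ≤ m₀ := by
    set K₀ : Set (E n) := {X | X ∈ B ∧ u ≤ γ X} with hK₀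
    by_cases hK₀ne : K₀.Nonempty
    · have hK₀cpt : IsCompact K₀ := by
        have : K₀ = B ∩ γ ⁻¹' (Ici u) := by
          ext X; simp [hK₀, Set.mem_preimage, Set.mem_Ici, Set.mem_inter_iff]
        rw [this]
        exact hBc.inter_right (isClosed_Ici.preimage hγcont)
      obtain ⟨X₀, hX₀, hmax⟩ := hK₀cpt.exists_isMaxOn hK₀ne (cont_f y).continuousOn
      refine ⟨‖X₀‖ - ⟪X₀, y⟫_ℝ, ?_, fun X hX hu => hmax ⟨hX, hu⟩⟩
      rcases lt_or_eq_of_le (hfB X₀ hX₀.1) with h | h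
      · exact h
      · exact absurd (hγA X₀ ⟨hX₀.1, h⟩) (not_lt.2 hX₀.2)
    · exact ⟨p - 1, by linarith, fun X hX hu => absurd ⟨hX, hu⟩
        (fun hmem => hK₀ne ⟨X, hmem⟩)⟩
  obtain ⟨m₀, hm₀lt, hm₀bd⟩ := hm₀
  set ε : ℝ := p - m₀ with hε
  have hεpos : 0 < ε := sub_pos.2 hm₀lt
  -- the compact set S of near-maximizers and the bound γ₁ on it
  set S : Set (E n) := {X | X ∈ B ∧ p - ε / 2 ≤ ‖X‖ - ⟪X, y⟫_ℝ} with hS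
  have hScpt : IsCompact S := by
    have : S = B ∩ (fun X => ‖X‖ - ⟪X, y⟫_ℝ) ⁻¹' (Ici (p - ε / 2)) := by
      ext X; simp [hS, Set.mem_preimage, Set.mem_Ici, Set.mem_inter_iff]
    rw [this]
    exact hBc.inter_right (isClosed_Ici.preimage (cont_f y))
  have hSne : S.Nonempty := by
    obtain ⟨X, hXB, hXf⟩ := hAne
    exact ⟨X, hXB, by rw [hXf]; linarith⟩
  obtain ⟨X₁, hX₁, hγmax⟩ := hScpt.exists_isMaxOn hSne hγcont.continuousOn
  have hγ₁lt : γ X₁ < u := by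
    by_contra hge
    push_neg at hge
    have h1 := hm₀bd X₁ hX₁.1 hge
    have h2 := hX₁.2
    rw [hε] at h2
    linarith
  -- choose t
  set C : ℝ := M * ‖V‖ ^ 2 / 2 with hC
  have hC0 : 0 ≤ C := by positivity
  set Γ : ℝ := 2 * M * ‖V‖ with hΓ
  set t : ℝ := min 1 (min ((u - γ X₁) / (2 * (C + 1)))
    (min (ε / (2 * (Γ + C + |u| + 1))) (1 / (2 * (‖V‖ + 1))))) with ht
  have htpos : 0 < t := by
    apply lt_min one_pos
    apply lt_min (div_pos (by linarith) (by positivity))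
    exact lt_min (div_pos hεpos (by positivity)) (by positivity)
  have ht1 : t ≤ 1 := min_le_left _ _
  have ht2 : t * (C + 1) ≤ (u - γ X₁) / 2 := by
    have h' : t ≤ (u - γ X₁) / (2 * (C + 1)) :=
      le_trans (min_le_right _ _) (min_le_left _ _)
    rw [le_div_iff₀ (by positivity)] at h'
    linarith
  have ht3 : t * (Γ + C + |u| + 1) ≤ ε / 2 := by
    have h' : t ≤ ε / (2 * (Γ + C + |u| + 1)) := by
      refine le_trans (min_le_right _ _) (le_trans (min_le_right _ _) (min_le_left _ _))
    have hpos : (0:ℝ) < Γ + C + |u| + 1 := by positivity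
    rw [le_div_iff₀ (by positivity)] at h'
    linarith
  have ht4 : t * (‖V‖ + 1) ≤ 1 / 2 := by
    have h' : t ≤ 1 / (2 * (‖V‖ + 1)) := by
      refine le_trans (min_le_right _ _) (le_trans (min_le_right _ _) (min_le_right _ _))
    rw [le_div_iff₀ (by positivity)] at h'
    linarith
  clear ht
  clear_value t
  -- the perturbed direction
  set Y : E n := y - t • V with hY
  have hYnorm_le : ‖Y‖ ≤ 1 - t * ⟪y, V⟫_ℝ + t ^ 2 * ‖V‖ ^ 2 / 2 := by
    have : Y = y + (-(t • V)) := by rw [hY]; abel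
    rw [this]
    have := norm_add_le_quad (w := -(t • V)) hy1
    rw [inner_neg_right, real_inner_smul_right, norm_neg, norm_smul, Real.norm_eq_abs,
      abs_of_pos htpos] at this
    calc ‖y + -(t • V)‖ ≤ 1 + -(t * ⟪y, V⟫_ℝ) + (t * ‖V‖) ^ 2 / 2 := this
    _ = 1 - t * ⟪y, V⟫_ℝ + t ^ 2 * ‖V‖ ^ 2 / 2 := by ring
  have hYpos : 0 < ‖Y‖ := by
    have h1 : ‖y‖ - ‖t • V‖ ≤ ‖Y‖ := norm_sub_norm_le y (t • V)
    have h2 : ‖t • V‖ = t * ‖V‖ := by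
      rw [norm_smul, Real.norm_eq_abs, abs_of_pos htpos]
    have h3 : t * ‖V‖ ≤ 1 / 2 := by nlinarith
    rw [hy1, h2] at h1
    linarith
  have hYne : Y ≠ 0 := norm_pos_iff.1 hYpos
  -- (α): lower bound via the maximizer in direction Y
  set y'' : E n := ‖Y‖⁻¹ • Y with hy''
  have hy''sph : y'' ∈ sph n := by
    rw [sph, mem_sphere_zero_iff_norm, hy'', norm_smul, norm_inv, norm_norm,
      inv_mul_cancel₀ (ne_of_gt hYpos)]
  have hsm : ∀ W : E n, ‖Y‖ * ⟪W, y''⟫_ℝ = ⟪W, Y⟫_ℝ := by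
    intro W
    rw [hy'', real_inner_smul_right, ← mul_assoc, mul_inv_cancel₀ (ne_of_gt hYpos), one_mul]
  obtain ⟨X', hX'B, hX'max⟩ := exists_focal_max hBc hne y''
  have halpha : ⟪-Z, Y⟫_ℝ ≤ ‖X'‖ * ‖Y‖ - ⟪X', Y⟫_ℝ := by
    have h1 : ⟪Z, -y''⟫_ℝ ≤ focal n B y'' := hZ y'' hy''sph
    have e1 : ⟪-Z, Y⟫_ℝ = ‖Y‖ * ⟪Z, -y''⟫_ℝ := by
      rw [← hsm (-Z), inner_neg_left, inner_neg_right]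
    calc ⟪-Z, Y⟫_ℝ = ‖Y‖ * ⟪Z, -y''⟫_ℝ := e1
    _ ≤ ‖Y‖ * focal n B y'' := mul_le_mul_of_nonneg_left h1 hYpos.le
    _ = ‖Y‖ * (‖X'‖ - ⟪X', y''⟫_ℝ) := by rw [hX'max]
    _ = ‖X'‖ * ‖Y‖ - ⟪X', Y⟫_ℝ := by rw [mul_sub, hsm X']; ring
  -- (β): upper bound
  have hbeta : ‖X'‖ * ‖Y‖ - ⟪X', Y⟫_ℝ < ⟪-Z, Y⟫_ℝ := by
    have hXM : ‖X'‖ ≤ M := hM X' hX'B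
    have hinnerY : ⟪X', Y⟫_ℝ = ⟪X', y⟫_ℝ - t * ⟪X', V⟫_ℝ := by
      rw [hY, inner_sub_right, real_inner_smul_right]
    have hγX' : γ X' = ⟪X', V⟫_ℝ - ‖X'‖ * ⟪y, V⟫_ℝ := by
      simp only [hγ, inner_sub_left, real_inner_smul_left]
    have hup : ‖X'‖ * ‖Y‖ - ⟪X', Y⟫_ℝ ≤
        (‖X'‖ - ⟪X', y⟫_ℝ) + t * γ X' + t ^ 2 * C := by
      have h1 : ‖X'‖ * ‖Y‖ ≤ ‖X'‖ * (1 - t * ⟪y, V⟫_ℝ + t ^ 2 * ‖V‖ ^ 2 / 2) :=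
        mul_le_mul_of_nonneg_left hYnorm_le (norm_nonneg _)
      have h2 : ‖X'‖ * (t ^ 2 * ‖V‖ ^ 2 / 2) ≤ t ^ 2 * C := by
        rw [hC]
        have h3 := mul_le_mul_of_nonneg_right hXM
          (by positivity : (0:ℝ) ≤ t ^ 2 * ‖V‖ ^ 2 / 2)
        linarith [h3]
      rw [hinnerY, hγX']
      linarith [h1, h2]
    have hZV : u < ⟪Z, V⟫_ℝ := by
      rw [real_inner_comm, hV]; exact hfZ
    have hZY : ⟪-Z, Y⟫_ℝ = p + t * ⟪Z, V⟫_ℝ := by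
      rw [hY, inner_sub_right, real_inner_smul_right, inner_neg_left, inner_neg_left]
      have : -⟪Z, y⟫_ℝ = p := by rw [← hact, inner_neg_right]
      linarith [this]
    rcases le_or_gt (p - ε / 2) (‖X'‖ - ⟪X', y⟫_ℝ) with hcase | hcase
    · -- X' ∈ S
      have hγle : γ X' ≤ γ X₁ := hγmax ⟨hX'B, hcase⟩
      have hfle : ‖X'‖ - ⟪X', y⟫_ℝ ≤ p := hfB X' hX'B
      have hkey : t * C < u - γ X₁ := by linarith
      rw [hZY]
      calc ‖X'‖ * ‖Y‖ - ⟪X', Y⟫_ℝ ≤ (‖X'‖ - ⟪X', y⟫_ℝ) + t * γ X' + t ^ 2 * C := hup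
      _ ≤ p + t * γ X₁ + t ^ 2 * C := by
          have := mul_le_mul_of_nonneg_left hγle htpos.le
          nlinarith
      _ < p + t * u := by
          have := mul_lt_mul_of_pos_left hkey htpos
          nlinarith
      _ < p + t * ⟪Z, V⟫_ℝ := by
          have := mul_lt_mul_of_pos_left hZV htpos
          linarith
    · -- X' far from maximizing
      have hγle : γ X' ≤ Γ := hγbd X' hX'B
      rw [hZY]
      have habs : -|u| ≤ u := neg_abs_le u
      calc ‖X'‖ * ‖Y‖ - ⟪X', Y⟫_ℝ ≤ (‖X'‖ - ⟪X', y⟫_ℝ) + t * γ X' + t ^ 2 * C := hup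
      _ < (p - ε / 2) + t * Γ + t ^ 2 * C := by
          have := mul_le_mul_of_nonneg_left hγle htpos.le
          linarith
      _ ≤ p + t * u := by
          have h5 : t * C * t ≤ t * C * 1 :=
            mul_le_mul_of_nonneg_left ht1 (mul_nonneg htpos.le hC0)
          have h6 := mul_le_mul_of_nonneg_left habs htpos.le
          nlinarith
      _ < p + t * ⟪Z, V⟫_ℝ := by
          have := mul_lt_mul_of_pos_left hZV htpos
          linarith
  linarith [halpha, hbeta]

end Stmt15aux4
namespace Stmt15aux5
open Stmt15aux Stmt15aux2 Stmt15aux3 Stmt15aux4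

variable {n : ℕ} {B : Set (E n)}

/-- the convex "certificate" set -/
def Qset (n : ℕ) (B : Set (E n)) (y : E n) : Set (E n) :=
  {Z : E n | ∃ μ : ℝ, 0 ≤ μ ∧ ⟪Z, -y⟫_ℝ = focal n B y ∧
    ‖Z‖ ^ 2 ≤ 2 * μ * focal n B y ∧
    ∀ y' ∈ sph n, ⟪Z, -y'⟫_ℝ ≤ focal n B y' - μ * (1 - ⟪y, y'⟫_ℝ)}

/-- the closed weaker certificate set -/
def Qset' (n : ℕ) (B : Set (E n)) (y : E n) : Set (E n) :=
  {Z : E n | ⟪Z, -y⟫_ℝ = focal n B y ∧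
    ∀ y' ∈ sph n, ⟪Z, -y'⟫_ℝ ≤
      focal n B y' - ‖Z‖ ^ 2 / (2 * focal n B y) * (1 - ⟪y, y'⟫_ℝ)}

lemma convex_Qset (y : E n) : Convex ℝ (Qset n B y) := by
  rintro Z₁ ⟨μ₁, hμ₁0, hact₁, hsq₁, hall₁⟩ Z₂ ⟨μ₂, hμ₂0, hact₂, hsq₂, hall₂⟩ a b ha hb hab
  refine ⟨a * μ₁ + b * μ₂, by positivity, ?_, ?_, ?_⟩
  · rw [inner_add_left, real_inner_smul_left, real_inner_smul_left, hact₁, hact₂]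
    rw [← add_mul, hab, one_mul]
  · have hn : ‖a • Z₁ + b • Z₂‖ ≤ a * ‖Z₁‖ + b * ‖Z₂‖ := by
      calc ‖a • Z₁ + b • Z₂‖ ≤ ‖a • Z₁‖ + ‖b • Z₂‖ := norm_add_le _ _
      _ = a * ‖Z₁‖ + b * ‖Z₂‖ := by
          rw [norm_smul, norm_smul, Real.norm_eq_abs, Real.norm_eq_abs,
            abs_of_nonneg ha, abs_of_nonneg hb]
    have hsq : ‖a • Z₁ + b • Z₂‖ ^ 2 ≤ (a * ‖Z₁‖ + b * ‖Z₂‖) ^ 2 := by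
      apply sq_le_sq' _ hn
      have : 0 ≤ a * ‖Z₁‖ + b * ‖Z₂‖ := by positivity
      linarith [norm_nonneg (a • Z₁ + b • Z₂)]
    have hconv : (a * ‖Z₁‖ + b * ‖Z₂‖) ^ 2 ≤ a * ‖Z₁‖ ^ 2 + b * ‖Z₂‖ ^ 2 := by
      nlinarith [sq_nonneg (‖Z₁‖ - ‖Z₂‖), mul_nonneg ha hb]
    have := mul_le_mul_of_nonneg_left hsq₁ ha
    have := mul_le_mul_of_nonneg_left hsq₂ hb
    nlinarith
  · intro y' hy'
    have h1 := hall₁ y' hy'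
    have h2 := hall₂ y' hy'
    rw [inner_add_left, real_inner_smul_left, real_inner_smul_left]
    have := mul_le_mul_of_nonneg_left h1 ha
    have := mul_le_mul_of_nonneg_left h2 hb
    have hone : a * focal n B y' + b * focal n B y' = focal n B y' := by
      rw [← add_mul, hab, one_mul]
    nlinarith

lemma directrix_pts_subset_Qset (hBc : IsCompact B) {y : E n} (hy : y ∈ sph n) :
    (fun X => X - ‖X‖ • y) '' {X | X ∈ B ∧ ‖X‖ - ⟪X, y⟫_ℝ = focal n B y}
      ⊆ Qset n B y := by
  rintro _ ⟨X, ⟨hXB, hXf⟩, rfl⟩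
  have hy1 : ‖y‖ = 1 := mem_sphere_zero_iff_norm.1 hy
  refine ⟨‖X‖, norm_nonneg X, ?_, ?_, ?_⟩
  · rw [directrix_pt_inner hy, hXf]
  · have : ‖X - ‖X‖ • y‖ ^ 2 = ‖X‖ ^ 2 - 2 * (‖X‖ * ⟪X, y⟫_ℝ) + ‖X‖ ^ 2 := by
      rw [@norm_sub_sq_real, real_inner_smul_right, norm_smul, Real.norm_eq_abs,
        abs_of_nonneg (norm_nonneg X), hy1, mul_one]
    rw [this, ← hXf]
    ring_nf
    nlinarith [norm_nonneg X]
  · intro y' hy'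
    rw [inner_directrix]
    have := focal_ge hBc hXB y'
    nlinarith [norm_nonneg X]

lemma Qset_subset_Qset' {y : E n} (hy : y ∈ sph n) (hppos : 0 < focal n B y) :
    Qset n B y ⊆ Qset' n B y := by
  rintro Z ⟨μ, hμ0, hact, hsq, hall⟩
  refine ⟨hact, fun y' hy' => ?_⟩
  have hlam : ‖Z‖ ^ 2 / (2 * focal n B y) ≤ μ := by
    rw [div_le_iff₀ (by positivity)]
    linarith [hsq]
  have hc' : ⟪y, y'⟫_ℝ ≤ 1 := by
    have := real_inner_le_norm y y'
    rw [mem_sphere_zero_iff_norm.1 hy, mem_sphere_zero_iff_norm.1 hy'] at this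
    linarith
  have := hall y' hy'
  nlinarith
lemma isClosed_Qset' (y : E n) : IsClosed (Qset' n B y) := by
  have h1 : IsClosed {Z : E n | ⟪Z, -y⟫_ℝ = focal n B y} :=
    isClosed_eq (Continuous.inner continuous_id continuous_const) continuous_const
  have h2 : IsClosed {Z : E n | ∀ y' ∈ sph n, ⟪Z, -y'⟫_ℝ ≤
      focal n B y' - ‖Z‖ ^ 2 / (2 * focal n B y) * (1 - ⟪y, y'⟫_ℝ)} := by
    have : {Z : E n | ∀ y' ∈ sph n, ⟪Z, -y'⟫_ℝ ≤
        focal n B y' - ‖Z‖ ^ 2 / (2 * focal n B y) * (1 - ⟪y, y'⟫_ℝ)} =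
        ⋂ y' ∈ sph n, {Z : E n | ⟪Z, -y'⟫_ℝ ≤
          focal n B y' - ‖Z‖ ^ 2 / (2 * focal n B y) * (1 - ⟪y, y'⟫_ℝ)} := by
      ext Z; simp [Set.mem_iInter]
    rw [this]
    refine isClosed_biInter fun y' _ => isClosed_le
      (Continuous.inner continuous_id continuous_const) ?_
    exact continuous_const.sub
      (((continuous_norm.pow 2).div_const _).mul continuous_const)
  have : Qset' n B y = _ ∩ _ := rfl
  rw [this]
  exact h1.inter h2

/-- Main hard direction: active boundary points are directrix points. -/
lemma active_to_directrix (hB : IsReflectorBody n B) {Z y : E n} (hy : y ∈ sph n)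
    (hZ : Z ∈ Dset n B) (hact : ⟪Z, -y⟫_ℝ = focal n B y) :
    ∃ X ∈ frontier B, ‖X‖ - ⟪X, y⟫_ℝ = focal n B y ∧ Z = X - ‖X‖ • y := by
  have hBc : IsCompact B := hB.1
  have hy1 : ‖y‖ = 1 := mem_sphere_zero_iff_norm.1 hy
  have hyy : ⟪y, y⟫_ℝ = 1 := by
    rw [real_inner_self_eq_norm_sq, hy1]; norm_num
  obtain ⟨ε₀, hε₀, hεle⟩ := focal_pos hB
  set p : ℝ := focal n B y with hp
  have hppos : 0 < p := lt_of_lt_of_le hε₀ (hεle y hy)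
  have hQ : Z ∈ Qset' n B y := by
    have h1 := mem_hull_of_active hB hy hZ hact
    have h2 : closure (convexHull ℝ ((fun X => X - ‖X‖ • y) ''
        {X | X ∈ B ∧ ‖X‖ - ⟪X, y⟫_ℝ = focal n B y})) ⊆ Qset' n B y :=
      closure_minimal (convexHull_min (directrix_pts_subset_Qset hBc hy)
        (convex_Qset y) |>.trans (Qset_subset_Qset' hy hppos)) (isClosed_Qset' y)
    exact h2 h1
  obtain ⟨hQact, hQall⟩ := hQ
  set lam : ℝ := ‖Z‖ ^ 2 / (2 * p) with hlam
  have hlam0 : 0 ≤ lam := by positivity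
  have hZsq : ‖Z‖ ^ 2 = 2 * lam * p := by
    rw [hlam]; field_simp
  have hZy : ⟪Z, y⟫_ℝ = -p := by
    rw [← hact, inner_neg_right]; ring
  set X : E n := Z + lam • y with hX
  have hXnorm : ‖X‖ = lam := by
    apply eq_of_sq_eq_sq (norm_nonneg X) hlam0
    rw [hX, @norm_add_sq_real, real_inner_smul_right, hZy, norm_smul, Real.norm_eq_abs,
      abs_of_nonneg hlam0, hy1, mul_one]
    rw [hZsq]; ring
  have hXy : ⟪X, y⟫_ℝ = lam - p := by
    rw [hX, inner_add_left, real_inner_smul_left, hZy, hyy]; ring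
  have hXf : ‖X‖ - ⟪X, y⟫_ℝ = p := by rw [hXnorm, hXy]; ring
  have hXB : X ∈ B := by
    rw [mem_B_iff hB]
    intro y' hy'
    have h1 := hQall y' hy'
    have h2 : ‖X‖ - ⟪X, y'⟫_ℝ = lam * (1 - ⟪y, y'⟫_ℝ) + ⟪Z, -y'⟫_ℝ := by
      rw [hXnorm, hX, inner_add_left, real_inner_smul_left, inner_neg_right]
      ring
    rw [h2]
    linarith
  have hZX : Z = X - ‖X‖ • y := by
    rw [hXnorm, hX]; abel
  refine ⟨X, ⟨?_, ?_⟩, hXf, hZX⟩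
  · rw [hBc.isClosed.closure_eq]; exact hXB
  · -- X is not in the interior of B
    intro hint
    obtain ⟨δ, hδ, hball⟩ := Metric.mem_nhds_iff.1 (mem_interior_iff_mem_nhds.1 hint)
    set s : ℝ := δ / 2 with hs
    have hspos : 0 < s := by positivity
    have hmem : X - s • y ∈ B := by
      apply hball
      rw [Metric.mem_ball, dist_eq_norm]
      simp only [sub_sub_cancel_left, norm_neg, norm_smul, hy1, mul_one, Real.norm_eq_abs]
      rw [abs_of_pos hspos]; linarith
    have hnormsq : ‖X - s • y‖ ^ 2 = (lam - s) ^ 2 + 2 * s * p := by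
      rw [@norm_sub_sq_real, real_inner_smul_right, hXy, norm_smul, Real.norm_eq_abs,
        abs_of_pos hspos, hy1, mul_one]
      have : ‖X‖ ^ 2 = lam ^ 2 := by rw [hXnorm]
      rw [this]; ring
    have hgt : lam - s < ‖X - s • y‖ := by
      nlinarith [norm_nonneg (X - s • y), mul_pos hspos hppos]
    have hinner : ⟪X - s • y, y⟫_ℝ = lam - p - s := by
      rw [inner_sub_left, real_inner_smul_left, hXy, hyy]; ring
    have hcontra : p < ‖X - s • y‖ - ⟪X - s • y, y⟫_ℝ := by
      rw [hinner]; linarith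
    have := focal_ge hBc hmem y
    rw [← hp] at this
    linarith

end Stmt15aux5

open Stmt15aux Stmt15aux2 Stmt15aux3 Stmt15aux4 Stmt15aux5

/-- The directrix `D(R)` is the boundary of the compact convex body
`𝓓 = {Z : ⟪Z,-y⟫ ≤ p(y) for all y ∈ Sⁿ}`, which contains the origin in its interior;
hence `D(R)` is a closed convex hypersurface, and the support function `H` of `𝓓`
satisfies `H(-y) = p(y)` for all `y ∈ Sⁿ`. -/
theorem statement15 (n : ℕ) (hn : 1 ≤ n) (B : Set (E n)) (hB : IsReflectorBody n B)
    (D : Set (E n))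
    (hD : D = {Z : E n | ∀ y ∈ sph n, ⟪Z, -y⟫_ℝ ≤ focal n B y}) :
    IsCompact D ∧ Convex ℝ D ∧ (0 : E n) ∈ interior D ∧
    directrix n B = frontier D ∧
    (∀ y ∈ sph n, sSup ((fun Z => ⟪Z, -y⟫_ℝ) '' D) = focal n B y) := by
  have hDD : D = Dset n B := hD
  subst hDD
  have hBc : IsCompact B := hB.1
  have hne : B.Nonempty := ⟨0, interior_subset hB.2.1⟩
  obtain ⟨ε₀, hε₀, hεle⟩ := focal_pos hB
  have h0D : (0 : E n) ∈ Dset n B := by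
    intro y hy
    rw [inner_zero_left]
    exact le_of_lt (lt_of_lt_of_le hε₀ (hεle y hy))
  refine ⟨isCompact_Dset hB, convex_Dset, zero_interior_Dset hB, ?_, ?_⟩
  · -- directrix = frontier
    apply Set.eq_of_subset_of_subset
    · rintro Z ⟨X, hXfr, y, hy, hXf, rfl⟩
      have hXB : X ∈ B := by
        have := frontier_subset_closure (s := B) hXfr
        rwa [hBc.isClosed.closure_eq] at this
      exact active_mem_frontier (directrix_pt_mem hBc hXB hy) hy
        (by rw [directrix_pt_inner hy, hXf])
    · intro Z hZfr
      have hZD : Z ∈ Dset n B := by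
        have := frontier_subset_closure (s := Dset n B) hZfr
        rwa [isClosed_Dset.closure_eq] at this
      have hni : Z ∉ interior (Dset n B) := hZfr.2
      obtain ⟨y, hy, hact⟩ := exists_active hB hZD hni
      obtain ⟨X, hXfr, hXf, hZX⟩ := active_to_directrix hB hy hZD hact
      exact ⟨X, hXfr, y, hy, hXf, hZX⟩
  · -- support function values
    intro y hy
    apply le_antisymm
    · apply csSup_le (Set.Nonempty.image _ ⟨0, h0D⟩)
      rintro v ⟨Z, hZ, rfl⟩
      exact hZ y hy
    · obtain ⟨X, hXB, hXf⟩ := exists_focal_max hBc hne y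
      have hmem : X - ‖X‖ • y ∈ Dset n B := directrix_pt_mem hBc hXB hy
      have hbdd : BddAbove ((fun Z => ⟪Z, -y⟫_ℝ) '' Dset n B) :=
        ((isCompact_Dset hB).image
          (Continuous.inner continuous_id continuous_const)).bddAbove
      have := le_csSup hbdd ⟨X - ‖X‖ • y, hmem, rfl⟩
      have h2 : (fun Z => ⟪Z, -y⟫_ℝ) (X - ‖X‖ • y) = focal n B y := by
        show ⟪X - ‖X‖ • y, -y⟫_ℝ = focal n B y
        rw [directrix_pt_inner hy, hXf]
      rwa [h2] at this
end
end

section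
/- Let R = ∂B be a nondegenerate convex reflector with focal function p, and let D(R) be its directrix. Then for every y ∈ Sⁿ, the hyperplane Q(y) = {Z ∈ ℝ^{n+1} : ⟨Z,−y⟩ = p(y)} is supporting to D(R): one has ⟨Z,−y⟩ ≤ p(y) for all Z ∈ D(R), and Q(y) ∩ D(R) ≠ ∅. (The hyperplanes Q(y) are the directrix hyperplanes of the paraboloids supporting R.) -/
open scoped InnerProductSpace ENNReal
open Metric Set

noncomputable section

/-- For every `y ∈ Sⁿ` the hyperplane `Q(y) = {Z : ⟪Z,-y⟫ = p(y)}` is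
supporting to the directrix `D(R)`: `⟪Z,-y⟫ ≤ p(y)` for all `Z ∈ D(R)` and
`Q(y) ∩ D(R) ≠ ∅`. -/
theorem statement16 (n : ℕ) (hn : 1 ≤ n) (B : Set (E n)) (hB : IsReflectorBody n B)
    (y : E n) (hy : y ∈ sph n) :
    (∀ Z ∈ directrix n B, ⟪Z, -y⟫_ℝ ≤ focal n B y) ∧
    (∃ Z ∈ directrix n B, ⟪Z, -y⟫_ℝ = focal n B y) := by
  obtain ⟨hcomp, h0, pt, hpt, hBdef⟩ := hB
  have hBclosed : IsClosed B := hcomp.isClosed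
  have hBne : B.Nonempty := ⟨0, interior_subset h0⟩
  have hy1 : ‖y‖ = 1 := mem_sphere_zero_iff_norm.mp hy
  have hcont : Continuous fun X : E n => ‖X‖ - ⟪X, y⟫_ℝ :=
    continuous_norm.sub (continuous_id.inner continuous_const)
  have hbdd : BddAbove ((fun X : E n => ‖X‖ - ⟪X, y⟫_ℝ) '' B) :=
    (hcomp.image hcont).bddAbove
  constructor
  · rintro Z ⟨X, hX, z, hz, -, rfl⟩
    have hz1 : ‖z‖ = 1 := mem_sphere_zero_iff_norm.mp hz
    have hXB : X ∈ B := hBclosed.frontier_subset hX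
    have h1 : ⟪X - ‖X‖ • z, -y⟫_ℝ = ‖X‖ * ⟪z, y⟫_ℝ - ⟪X, y⟫_ℝ := by
      rw [inner_neg_right, inner_sub_left, real_inner_smul_left]
      ring
    have h2 : ⟪z, y⟫_ℝ ≤ 1 := by
      have := real_inner_le_norm z y
      simpa [hz1, hy1] using this
    have h3 : ‖X‖ * ⟪z, y⟫_ℝ ≤ ‖X‖ := by
      nlinarith [norm_nonneg X]
    have h4 : ‖X‖ - ⟪X, y⟫_ℝ ≤ focal n B y := le_csSup hbdd ⟨X, hXB, rfl⟩
    rw [h1]; linarith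
  · obtain ⟨X₀, hX₀B, hmax⟩ := hcomp.exists_sSup_image_eq hBne hcont.continuousOn
    have hval : ‖X₀‖ - ⟪X₀, y⟫_ℝ = focal n B y := hmax.symm
    obtain ⟨r, hr, hball⟩ := Metric.mem_nhds_iff.mp (mem_interior_iff_mem_nhds.mp h0)
    have hmem : (-(r/2)) • y ∈ B := by
      apply hball
      simp only [Metric.mem_ball, dist_zero_right, norm_smul, hy1, mul_one, norm_neg,
        Real.norm_eq_abs]
      rw [abs_of_pos (by linarith)]
      linarith
    have hpos : 0 < focal n B y := by
      have hle : ‖(-(r/2)) • y‖ - ⟪(-(r/2)) • y, y⟫_ℝ ≤ focal n B y :=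
        le_csSup hbdd ⟨_, hmem, rfl⟩
      have heq : ‖(-(r/2)) • y‖ - ⟪(-(r/2)) • y, y⟫_ℝ = r := by
        rw [norm_smul, real_inner_smul_left, real_inner_self_eq_norm_mul_norm, hy1,
          Real.norm_eq_abs, abs_neg, abs_of_pos (show (0:ℝ) < r/2 by linarith)]
        ring
      linarith
    have hX0pos : 0 < ‖X₀‖ := by
      rcases eq_or_lt_of_le (norm_nonneg X₀) with h | h
      · exfalso
        have hz : X₀ = 0 := (norm_eq_zero.mp h.symm)
        rw [hz] at hval
        simp at hval
        linarith
      · exact h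
    have hfront : X₀ ∈ frontier B := by
      refine ⟨subset_closure hX₀B, fun hint => ?_⟩
      obtain ⟨s, hs, hball'⟩ := Metric.mem_nhds_iff.mp (mem_interior_iff_mem_nhds.mp hint)
      set ε := min (s / (2 * ‖X₀‖)) 1 with hε
      have hεpos : 0 < ε := lt_min (by positivity) one_pos
      have hmem' : (1 + ε) • X₀ ∈ B := by
        apply hball'
        have heq : (1 + ε) • X₀ - X₀ = ε • X₀ := by
          rw [add_smul, one_smul]; abel
        rw [Metric.mem_ball, dist_eq_norm, heq, norm_smul, Real.norm_eq_abs,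
          abs_of_pos hεpos]
        have h1 : ε ≤ s / (2 * ‖X₀‖) := min_le_left _ _
        have h2 : ε * ‖X₀‖ ≤ s / (2 * ‖X₀‖) * ‖X₀‖ :=
          mul_le_mul_of_nonneg_right h1 (norm_nonneg _)
        have h3 : s / (2 * ‖X₀‖) * ‖X₀‖ = s / 2 := by
          field_simp
        linarith
      have hgt : ‖(1 + ε) • X₀‖ - ⟪(1 + ε) • X₀, y⟫_ℝ
          = (1 + ε) * (‖X₀‖ - ⟪X₀, y⟫_ℝ) := by
        rw [norm_smul, real_inner_smul_left, Real.norm_eq_abs,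
          abs_of_pos (by linarith : (0:ℝ) < 1 + ε)]
        ring
      have hle : ‖(1 + ε) • X₀‖ - ⟪(1 + ε) • X₀, y⟫_ℝ ≤ focal n B y :=
        le_csSup hbdd ⟨_, hmem', rfl⟩
      rw [hgt, hval] at hle
      nlinarith
    refine ⟨X₀ - ‖X₀‖ • y, ⟨X₀, hfront, y, hy, hval, rfl⟩, ?_⟩
    have heq : ⟪X₀ - ‖X₀‖ • y, -y⟫_ℝ = ‖X₀‖ * (‖y‖ * ‖y‖) - ⟪X₀, y⟫_ℝ := by
      rw [inner_neg_right, inner_sub_left, real_inner_smul_left,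
        real_inner_self_eq_norm_mul_norm]
      ring
    rw [heq, hy1]
    simpa using hval
end
end

section
/- Let R = ∂B be a nondegenerate convex reflector with support function h and directrix D(R). Then D(R) = {2h(u)u : u ∈ Sⁿ}, and the map u ↦ 2h(u)u from Sⁿ to ℝ^{n+1} is of class C¹; in particular the directrix is a C¹ hypersurface (a rescaling by the factor 2 of the pedal hypersurface of R). -/
open scoped InnerProductSpace ENNReal
open Metric Set

noncomputable section

namespace S17

variable {n : ℕ} {B : Set (E n)}

lemma norm_of_sph {y : E n} (hy : y ∈ sph n) : ‖y‖ = 1 := by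
  simpa [sph, mem_sphere_zero_iff_norm] using hy

lemma mem_sph {y : E n} (hy : ‖y‖ = 1) : y ∈ sph n := by
  simpa [sph, mem_sphere_zero_iff_norm]

lemma zero_mem (hB : IsReflectorBody n B) : (0 : E n) ∈ B := interior_subset hB.2.1

lemma exists_R (hB : IsReflectorBody n B) : ∃ R : ℝ, 0 < R ∧ ∀ X ∈ B, ‖X‖ ≤ R := by
  obtain ⟨C, hC⟩ := isBounded_iff_forall_norm_le.1 hB.1.isBounded
  exact ⟨max C 1, lt_of_lt_of_le one_pos (le_max_right _ _),
    fun X hX => le_trans (hC X hX) (le_max_left _ _)⟩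

lemma bddAbove_inner (hB : IsReflectorBody n B) (U : E n) :
    BddAbove ((fun X => ⟪X, U⟫_ℝ) '' B) := by
  obtain ⟨R, hR0, hR⟩ := exists_R hB
  refine ⟨R * ‖U‖, ?_⟩
  rintro _ ⟨X, hX, rfl⟩
  exact le_trans (real_inner_le_norm X U)
    (mul_le_mul_of_nonneg_right (hR X hX) (norm_nonneg _))

lemma bddAbove_F (hB : IsReflectorBody n B) (y : E n) :
    BddAbove ((fun X => ‖X‖ - ⟪X, y⟫_ℝ) '' B) := by
  obtain ⟨R, hR0, hR⟩ := exists_R hB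
  refine ⟨R + R * ‖y‖, ?_⟩
  rintro _ ⟨X, hX, rfl⟩
  have h1 : -⟪X, y⟫_ℝ ≤ ‖X‖ * ‖y‖ := by
    have := real_inner_le_norm (-X) y
    simpa [inner_neg_left] using this
  have h2 : ‖X‖ * ‖y‖ ≤ R * ‖y‖ :=
    mul_le_mul_of_nonneg_right (hR X hX) (norm_nonneg _)
  have := hR X hX
  simp only []
  linarith

lemma le_focal (hB : IsReflectorBody n B) {X : E n} (hX : X ∈ B) (y : E n) :
    ‖X‖ - ⟪X, y⟫_ℝ ≤ focal n B y :=
  le_csSup (bddAbove_F hB y) ⟨X, hX, rfl⟩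

lemma focal_le (hB : IsReflectorBody n B) {y : E n} {M : ℝ}
    (hM : ∀ X ∈ B, ‖X‖ - ⟪X, y⟫_ℝ ≤ M) : focal n B y ≤ M :=
  csSup_le ⟨_, ⟨0, zero_mem hB, rfl⟩⟩ (by rintro _ ⟨X, hX, rfl⟩; exact hM X hX)

lemma le_suppFn (hB : IsReflectorBody n B) {X : E n} (hX : X ∈ B) (U : E n) :
    ⟪X, U⟫_ℝ ≤ suppFn n B U :=
  le_csSup (bddAbove_inner hB U) ⟨X, hX, rfl⟩

lemma exists_eps (hB : IsReflectorBody n B) :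
    ∃ ε : ℝ, 0 < ε ∧ ∀ X : E n, ‖X‖ ≤ ε → X ∈ B := by
  have h0 := hB.2.1
  rw [mem_interior_iff_mem_nhds] at h0
  rcases Metric.mem_nhds_iff.1 h0 with ⟨ε, hε, hball⟩
  refine ⟨ε / 2, half_pos hε, fun X hX => hball ?_⟩
  rw [mem_ball, dist_zero_right]
  linarith

lemma focal_pos (hB : IsReflectorBody n B) {y : E n} (hy : y ∈ sph n) :
    0 < focal n B y := by
  obtain ⟨ε, hε, hmem⟩ := exists_eps hB
  have hy1 := norm_of_sph hy
  have hXB : ((-ε : ℝ) • y) ∈ B := by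
    apply hmem; rw [norm_smul, hy1]; simp [abs_of_pos hε, le_of_eq]
  have := le_focal hB hXB y
  rw [norm_smul, hy1, real_inner_smul_left, real_inner_self_eq_norm_sq, hy1] at this
  simp only [Real.norm_eq_abs, abs_neg, abs_of_pos hε] at this
  linarith

lemma suppFn_pos (hB : IsReflectorBody n B) {u : E n} (hu : u ∈ sph n) :
    0 < suppFn n B u := by
  obtain ⟨ε, hε, hmem⟩ := exists_eps hB
  have hu1 := norm_of_sph hu
  have hXB : (ε • u) ∈ B := by
    apply hmem; rw [norm_smul, hu1]; simp [abs_of_pos hε, le_of_eq]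
  have := le_suppFn hB hXB u
  rw [real_inner_smul_left, real_inner_self_eq_norm_sq, hu1] at this
  simpa using lt_of_lt_of_le (by simpa using hε) this

lemma mem_B_iff (hB : IsReflectorBody n B) {X : E n} :
    X ∈ B ↔ ∀ y ∈ sph n, ‖X‖ - ⟪X, y⟫_ℝ ≤ focal n B y := by
  constructor
  · exact fun hX y _ => le_focal hB hX y
  · intro hX
    obtain ⟨pt, _hpt, hBeq⟩ := hB.2.2
    rw [hBeq]
    intro y hy
    by_cases hT : pt y = ⊤
    · simp [hT]
    · rw [ENNReal.ofReal_le_iff_le_toReal hT]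
      refine le_trans (hX y hy) (focal_le hB fun X' hX' => ?_)
      have hmem : X' ∈ {X : E n | ∀ y ∈ sph n, ENNReal.ofReal (‖X‖ - ⟪X, y⟫_ℝ) ≤ pt y} := by
        rw [← hBeq]; exact hX'
      exact (ENNReal.ofReal_le_iff_le_toReal hT).1 (hmem y hy)

lemma exists_max (hB : IsReflectorBody n B) (U : E n) :
    ∃ X, X ∈ B ∧ (∀ X' ∈ B, ⟪X', U⟫_ℝ ≤ ⟪X, U⟫_ℝ) ∧ suppFn n B U = ⟪X, U⟫_ℝ := by
  obtain ⟨X, hXB, hmax⟩ := hB.1.exists_isMaxOn ⟨0, zero_mem hB⟩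
    ((continuous_id.inner continuous_const).continuousOn :
      ContinuousOn (fun X : E n => ⟪X, U⟫_ℝ) B)
  refine ⟨X, hXB, fun X' hX' => hmax hX', ?_⟩
  exact IsGreatest.csSup_eq ⟨⟨X, hXB, rfl⟩, by rintro _ ⟨X', hX', rfl⟩; exact hmax hX'⟩

lemma maxpt_frontier (hB : IsReflectorBody n B) {u X : E n} (hu : u ≠ 0)
    (hX : X ∈ B) (hmax : ∀ X' ∈ B, ⟪X', u⟫_ℝ ≤ ⟪X, u⟫_ℝ) : X ∈ frontier B := by
  rw [hB.1.isClosed.frontier_eq]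
  refine ⟨hX, fun hint => ?_⟩
  rw [mem_interior_iff_mem_nhds] at hint
  rcases Metric.mem_nhds_iff.1 hint with ⟨δ, hδ, hball⟩
  set t : ℝ := δ / (2 * ‖u‖) with ht
  have hu0 : 0 < ‖u‖ := norm_pos_iff.2 hu
  have htpos : 0 < t := by positivity
  have hmem : X + t • u ∈ B := by
    apply hball
    rw [mem_ball, dist_eq_norm]
    have : X + t • u - X = t • u := by abel
    rw [this, norm_smul, Real.norm_eq_abs, abs_of_pos htpos, ht]
    rw [div_mul_eq_mul_div, mul_comm]
    calc ‖u‖ * δ / (2 * ‖u‖) = δ / 2 := by field_simp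
    _ < δ := by linarith
  have := hmax _ hmem
  rw [inner_add_left, real_inner_smul_left, real_inner_self_eq_norm_sq] at this
  nlinarith [mul_pos htpos (pow_pos hu0 2)]


-- Part 2

lemma sph_compact : IsCompact (sph n) := isCompact_sphere 0 1

lemma sph_nonempty : (sph n).Nonempty := by
  refine ⟨EuclideanSpace.single 0 (1 : ℝ), mem_sph ?_⟩
  rw [EuclideanSpace.norm_single]; norm_num

lemma focal_lipschitz (hB : IsReflectorBody n B) {R : ℝ} (hR0 : 0 ≤ R)
    (hR : ∀ X ∈ B, ‖X‖ ≤ R) (y y' : E n) :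
    focal n B y ≤ focal n B y' + R * ‖y - y'‖ := by
  refine focal_le hB fun X hX => ?_
  have h1 : ‖X‖ - ⟪X, y'⟫_ℝ ≤ focal n B y' := le_focal hB hX y'
  have h2 : ⟪X, y' - y⟫_ℝ ≤ ‖X‖ * ‖y' - y‖ := real_inner_le_norm _ _
  have h3 : ‖X‖ * ‖y' - y‖ ≤ R * ‖y - y'‖ := by
    rw [norm_sub_rev y y']
    exact mul_le_mul_of_nonneg_right (hR X hX) (norm_nonneg _)
  have h4 : ⟪X, y' - y⟫_ℝ = ⟪X, y'⟫_ℝ - ⟪X, y⟫_ℝ := inner_sub_right _ _ _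
  linarith

lemma focal_continuous (hB : IsReflectorBody n B) : Continuous (focal n B) := by
  obtain ⟨R, hR0, hR⟩ := exists_R hB
  have : LipschitzWith (Real.toNNReal R) (focal n B) := by
    apply LipschitzWith.of_dist_le_mul
    intro y y'
    rw [Real.dist_eq, abs_le, Real.coe_toNNReal R hR0.le]
    constructor
    · have := focal_lipschitz hB hR0.le hR y' y
      rw [dist_eq_norm, norm_sub_rev] at *
      simp only [neg_le_sub_iff_le_add]
      rw [norm_sub_rev] at this
      linarith
    · have := focal_lipschitz hB hR0.le hR y y'
      rw [dist_eq_norm]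
      linarith
  exact this.continuous

lemma mem_interior_of_lt (hB : IsReflectorBody n B) {M : E n}
    (hlt : ∀ y ∈ sph n, ‖M‖ - ⟪M, y⟫_ℝ < focal n B y) : M ∈ interior B := by
  have hcont : ContinuousOn (fun y => focal n B y - (‖M‖ - ⟪M, y⟫_ℝ)) (sph n) := by
    apply Continuous.continuousOn
    have h1 : Continuous fun y : E n => ⟪M, y⟫_ℝ := continuous_const.inner continuous_id'
    exact (focal_continuous hB).sub (continuous_const.sub h1)
  obtain ⟨y₀, hy₀, hmin⟩ := sph_compact.exists_isMinOn sph_nonempty hcont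
  set δ : ℝ := focal n B y₀ - (‖M‖ - ⟪M, y₀⟫_ℝ) with hδdef
  have hδ : 0 < δ := by simpa [hδdef, sub_pos] using hlt y₀ hy₀
  rw [mem_interior_iff_mem_nhds, Metric.mem_nhds_iff]
  refine ⟨δ / 3, by positivity, fun X hX => ?_⟩
  rw [mem_ball, dist_eq_norm] at hX
  rw [mem_B_iff hB]
  intro y hy
  have hy1 := norm_of_sph hy
  have hb1 : ‖X‖ ≤ ‖M‖ + ‖X - M‖ := by
    have := norm_add_le (X - M) M
    simpa [sub_add_cancel, add_comm] using this
  have hb2 : ⟪M, y⟫_ℝ - ⟪X, y⟫_ℝ ≤ ‖X - M‖ := by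
    have h := real_inner_le_norm (M - X) y
    rw [norm_sub_rev] at h
    have he : ⟪M - X, y⟫_ℝ = ⟪M, y⟫_ℝ - ⟪X, y⟫_ℝ := inner_sub_left _ _ _
    rw [he, hy1, mul_one] at h
    exact h
  have hd : δ ≤ focal n B y - (‖M‖ - ⟪M, y⟫_ℝ) := hmin hy
  linarith

lemma midpoint_lt (hB : IsReflectorBody n B) {X₁ X₂ : E n} (h1 : X₁ ∈ B) (h2 : X₂ ∈ B)
    (hne : X₁ ≠ X₂) {y : E n} (hy : y ∈ sph n) :
    ‖(1 / 2 : ℝ) • (X₁ + X₂)‖ - ⟪(1 / 2 : ℝ) • (X₁ + X₂), y⟫_ℝ < focal n B y := by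
  have hF1 := le_focal hB h1 y
  have hF2 := le_focal hB h2 y
  have hfp := focal_pos hB hy
  have hnorm : ‖(1 / 2 : ℝ) • (X₁ + X₂)‖ = (1 / 2) * ‖X₁ + X₂‖ := by
    rw [norm_smul]; norm_num
  have hinner : ⟪(1 / 2 : ℝ) • (X₁ + X₂), y⟫_ℝ = (1/2) * (⟪X₁, y⟫_ℝ + ⟪X₂, y⟫_ℝ) := by
    rw [real_inner_smul_left, inner_add_left]
  rw [hnorm, hinner]
  rcases lt_or_eq_of_le (norm_add_le X₁ X₂) with hlt | heq
  · linarith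
  · have hray : SameRay ℝ X₁ X₂ := sameRay_iff_norm_add.2 heq
    rw [heq]
    by_cases h0 : X₁ = 0
    · subst h0
      simp only [norm_zero, zero_add, inner_zero_left]
      have h20 : X₂ ≠ 0 := fun h => hne (h ▸ rfl)
      linarith
    · obtain ⟨r, hr0, hrX⟩ := hray.exists_nonneg_left h0
      have hX2 : X₂ = r • X₁ := hrX.symm
      have hn2 : ‖X₂‖ = r * ‖X₁‖ := by
        rw [hX2, norm_smul, Real.norm_eq_abs, abs_of_nonneg hr0]
      have hi2 : ⟪X₂, y⟫_ℝ = r * ⟪X₁, y⟫_ℝ := by rw [hX2, real_inner_smul_left]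
      have hr1 : r ≠ 1 := by
        intro h; subst h; rw [one_smul] at hrX; exact hne hrX
      set F₁ : ℝ := ‖X₁‖ - ⟪X₁, y⟫_ℝ with hF₁def
      have hF2' : ‖X₂‖ - ⟪X₂, y⟫_ℝ = r * F₁ := by rw [hn2, hi2, hF₁def]; ring
      have goal_eq : (1/2) * (‖X₁‖ + ‖X₂‖) - 1/2 * (⟪X₁, y⟫_ℝ + ⟪X₂, y⟫_ℝ)
          = (1 + r) / 2 * F₁ := by rw [hn2, hi2, hF₁def]; ring
      rw [show (1:ℝ)/2 * (‖X₁‖ + ‖X₂‖) - 1/2 * (⟪X₁, y⟫_ℝ + ⟪X₂, y⟫_ℝ)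
          = (1 + r) / 2 * F₁ from goal_eq]
      rcases le_or_gt F₁ 0 with hF₁0 | hF₁0
      · have : (1 + r) / 2 * F₁ ≤ 0 :=
          mul_nonpos_of_nonneg_of_nonpos (by linarith) hF₁0
        linarith
      · rcases lt_or_gt_of_ne hr1 with hrlt | hrgt
        · have : (1 + r) / 2 * F₁ < 1 * F₁ := by
            apply mul_lt_mul_of_pos_right _ hF₁0; linarith
          rw [hF₁def] at this ⊢
          linarith
        · have h1' : (1 + r) / 2 * F₁ < r * F₁ := by
            apply mul_lt_mul_of_pos_right _ hF₁0; linarith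
          rw [← hF2'] at h1'
          linarith

lemma unique_max (hB : IsReflectorBody n B) {U X₁ X₂ : E n} (hU : U ≠ 0)
    (h1 : X₁ ∈ B) (hmax1 : ∀ X' ∈ B, ⟪X', U⟫_ℝ ≤ ⟪X₁, U⟫_ℝ)
    (h2 : X₂ ∈ B) (hmax2 : ∀ X' ∈ B, ⟪X', U⟫_ℝ ≤ ⟪X₂, U⟫_ℝ) : X₁ = X₂ := by
  by_contra hne
  set M : E n := (1 / 2 : ℝ) • (X₁ + X₂) with hM
  have hMint : M ∈ interior B :=
    mem_interior_of_lt hB fun y hy => midpoint_lt hB h1 h2 hne hy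
  have hval : ⟪X₂, U⟫_ℝ = ⟪X₁, U⟫_ℝ :=
    le_antisymm (hmax1 X₂ h2) (hmax2 X₁ h1)
  have hMval : ⟪M, U⟫_ℝ = ⟪X₁, U⟫_ℝ := by
    rw [hM, real_inner_smul_left, inner_add_left, hval]; ring
  rw [mem_interior_iff_mem_nhds] at hMint
  rcases Metric.mem_nhds_iff.1 hMint with ⟨δ, hδ, hball⟩
  have hU0 : 0 < ‖U‖ := norm_pos_iff.2 hU
  set t : ℝ := δ / (2 * ‖U‖) with htdef
  have htpos : 0 < t := by positivity
  have hmem : M + t • U ∈ B := by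
    apply hball
    rw [mem_ball, dist_eq_norm]
    have he : M + t • U - M = t • U := by abel
    rw [he, norm_smul, Real.norm_eq_abs, abs_of_pos htpos, htdef]
    rw [div_mul_eq_mul_div, mul_comm]
    calc ‖U‖ * δ / (2 * ‖U‖) = δ / 2 := by field_simp
    _ < δ := by linarith
  have hle := hmax1 _ hmem
  rw [inner_add_left, real_inner_smul_left, real_inner_smul_left, inner_add_left,
    real_inner_self_eq_norm_sq, hval] at hle
  nlinarith [mul_pos htpos (pow_pos hU0 2)]


-- ## the ball covering lemma
lemma ball_cover {x W : E n} {ρ : ℝ} (hx : ‖x‖ ≤ ρ) (hW : ‖W - x‖ ≤ ρ) :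
    ∃ c : E n, ‖W - c‖ ≤ ‖c‖ ∧ ‖c - x‖ + ‖c‖ ≤ ρ := by
  by_cases hcase : ‖W‖ ^ 2 ≤ 2 * ⟪W, x⟫_ℝ
  · refine ⟨x, ?_, by simpa using hx⟩
    have hsq : ‖W - x‖ ^ 2 ≤ ‖x‖ ^ 2 := by
      rw [norm_sub_sq_real]; linarith
    exact le_of_pow_le_pow_left₀ two_ne_zero (norm_nonneg _) hsq
  · push_neg at hcase
    have hW0 : W ≠ 0 := by
      intro h; subst h; simp at hcase
    have hWn : 0 < ‖W‖ := norm_pos_iff.2 hW0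
    set d : ℝ := ‖W‖ ^ 2 - ⟪W, x⟫_ℝ with hd
    have hd0 : 0 < d := by nlinarith
    set τ : ℝ := (‖W‖ ^ 2 / 2) / d with hτ
    have hτ0 : 0 < τ := by positivity
    have hτ1 : τ ≤ 1 := by
      rw [hτ, div_le_one hd0, hd]; nlinarith
    set c : E n := W + τ • (x - W) with hc
    have hWc : W - c = τ • (W - x) := by rw [hc]; module
    have hcx : c - x = (1 - τ) • (W - x) := by rw [hc]; module
    have hinner : ⟪c, W⟫_ℝ = ‖W‖ ^ 2 / 2 := by
      have hτd : τ * d = ‖W‖ ^ 2 / 2 := by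
        rw [hτ]; exact div_mul_cancel₀ _ hd0.ne'
      have hcomm : ⟪x, W⟫_ℝ = ⟪W, x⟫_ℝ := real_inner_comm W x
      rw [hc, inner_add_left, real_inner_smul_left, inner_sub_left,
        real_inner_self_eq_norm_sq, hcomm,
        show ⟪W, x⟫_ℝ = ‖W‖ ^ 2 - d from by rw [hd]; ring]
      have he : ‖W‖ ^ 2 + τ * (‖W‖ ^ 2 - d - ‖W‖ ^ 2) = ‖W‖ ^ 2 - τ * d := by ring
      rw [he, hτd]; ring
    have hnorm_eq : ‖W - c‖ = ‖c‖ := by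
      have h1 : ‖W - c‖ ^ 2 = ‖c‖ ^ 2 := by
        rw [norm_sub_sq_real, real_inner_comm, hinner]; ring
      have := le_of_pow_le_pow_left₀ two_ne_zero (norm_nonneg c) h1.le
      have h2 := le_of_pow_le_pow_left₀ two_ne_zero (norm_nonneg (W - c)) h1.ge
      linarith
    refine ⟨c, hnorm_eq.le, ?_⟩
    have e1 : ‖c - x‖ = (1 - τ) * ‖W - x‖ := by
      rw [hcx, norm_smul, Real.norm_eq_abs, abs_of_nonneg (by linarith)]
    have e2 : ‖c‖ = τ * ‖W - x‖ := by
      rw [← hnorm_eq, hWc, norm_smul, Real.norm_eq_abs, abs_of_pos hτ0]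
    rw [e1, e2]; nlinarith

-- ## the union of balls
def Uset (n : ℕ) (B : Set (E n)) : Set (E n) :=
  {q : E n | ∃ X ∈ B, ‖(2 : ℝ) • q - X‖ ≤ ‖X‖}

lemma Uset_convex (hB : IsReflectorBody n B) : Convex ℝ (Uset n B) := by
  rintro q₁ ⟨X₁, hX₁, hq₁⟩ q₂ ⟨X₂, hX₂, hq₂⟩ a b ha hb hab
  set W : E n := (2 : ℝ) • (a • q₁ + b • q₂) with hWdef
  set xb : E n := a • X₁ + b • X₂ with hxbdef
  set ρ : ℝ := a * ‖X₁‖ + b * ‖X₂‖ with hρdef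
  have hxρ : ‖xb‖ ≤ ρ := by
    refine le_trans (norm_add_le _ _) ?_
    rw [norm_smul, norm_smul, Real.norm_eq_abs, Real.norm_eq_abs,
      abs_of_nonneg ha, abs_of_nonneg hb]
  have hWx : ‖W - xb‖ ≤ ρ := by
    have he : W - xb = a • ((2:ℝ) • q₁ - X₁) + b • ((2:ℝ) • q₂ - X₂) := by
      rw [hWdef, hxbdef]; module
    rw [he]
    refine le_trans (norm_add_le _ _) ?_
    rw [norm_smul, norm_smul, Real.norm_eq_abs, Real.norm_eq_abs,
      abs_of_nonneg ha, abs_of_nonneg hb]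
    exact add_le_add (mul_le_mul_of_nonneg_left hq₁ ha) (mul_le_mul_of_nonneg_left hq₂ hb)
  obtain ⟨c, hc1, hc2⟩ := ball_cover hxρ hWx
  have hcB : c ∈ B := by
    rw [mem_B_iff hB]
    intro y hy
    have hy1 := norm_of_sph hy
    have hxc : ⟪xb, y⟫_ℝ - ⟪c, y⟫_ℝ ≤ ‖c - xb‖ := by
      have h := real_inner_le_norm (xb - c) y
      rw [hy1, mul_one, norm_sub_rev] at h
      calc ⟪xb, y⟫_ℝ - ⟪c, y⟫_ℝ = ⟪xb - c, y⟫_ℝ := (inner_sub_left _ _ _).symm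
        _ ≤ ‖c - xb‖ := h
    have hsplit : ⟪xb, y⟫_ℝ = a * ⟪X₁, y⟫_ℝ + b * ⟪X₂, y⟫_ℝ := by
      rw [hxbdef, inner_add_left, real_inner_smul_left, real_inner_smul_left]
    have hf1 : ‖X₁‖ - ⟪X₁, y⟫_ℝ ≤ focal n B y := le_focal hB hX₁ y
    have hf2 : ‖X₂‖ - ⟪X₂, y⟫_ℝ ≤ focal n B y := le_focal hB hX₂ y
    have := mul_le_mul_of_nonneg_left hf1 ha
    have := mul_le_mul_of_nonneg_left hf2 hb
    have hsum : a * focal n B y + b * focal n B y = focal n B y := by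
      rw [← add_mul, hab, one_mul]
    have hρy : ρ - ⟪xb, y⟫_ℝ ≤ focal n B y := by
      rw [hρdef, hsplit]; linarith
    linarith
  exact ⟨c, hcB, by rw [← hWdef]; exact hc1⟩

lemma suppFn_nonneg (hB : IsReflectorBody n B) (U : E n) : 0 ≤ suppFn n B U := by
  have := le_suppFn hB (zero_mem hB) U
  simpa using this

lemma Uset_radial (hB : IsReflectorBody n B) {u : E n} (hu : ‖u‖ = 1) {s : ℝ}
    (hs : 0 ≤ s) (hmem : s • u ∈ Uset n B) : s ≤ suppFn n B u := by
  obtain ⟨X, hX, hle⟩ := hmem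
  rcases eq_or_lt_of_le hs with h | h
  · rw [← h]; exact suppFn_nonneg hB u
  · have hsq : ‖(2:ℝ) • (s • u) - X‖ ^ 2 ≤ ‖X‖ ^ 2 :=
      pow_le_pow_left₀ (norm_nonneg _) hle 2
    rw [norm_sub_sq_real] at hsq
    have h1 : ‖(2:ℝ) • (s • u)‖ ^ 2 = 4 * s ^ 2 := by
      rw [norm_smul, norm_smul, hu, Real.norm_eq_abs, Real.norm_eq_abs,
        abs_of_nonneg hs]
      norm_num; ring
    have h2 : ⟪(2:ℝ) • (s • u), X⟫_ℝ = 2 * s * ⟪u, X⟫_ℝ := by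
      rw [real_inner_smul_left, real_inner_smul_left]; ring
    rw [h1, h2] at hsq
    have h3 : s ≤ ⟪u, X⟫_ℝ := by nlinarith
    calc s ≤ ⟪u, X⟫_ℝ := h3
      _ = ⟪X, u⟫_ℝ := real_inner_comm _ _
      _ ≤ suppFn n B u := le_suppFn hB hX u

lemma Uset_zero_nbhd (hB : IsReflectorBody n B) :
    ∃ ε : ℝ, 0 < ε ∧ ∀ q : E n, ‖q‖ ≤ ε → q ∈ Uset n B := by
  obtain ⟨ε, hε, hmem⟩ := exists_eps hB
  refine ⟨ε / 2, half_pos hε, fun q hq => ?_⟩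
  refine ⟨(2 : ℝ) • q, hmem _ ?_, by simp⟩
  rw [norm_smul]; simp only [Real.norm_eq_abs]
  rw [abs_of_nonneg (by norm_num : (0:ℝ) ≤ 2)]
  linarith

lemma Uset_zero_interior (hB : IsReflectorBody n B) : (0 : E n) ∈ interior (Uset n B) := by
  obtain ⟨ε, hε, hmem⟩ := Uset_zero_nbhd hB
  rw [mem_interior_iff_mem_nhds, Metric.mem_nhds_iff]
  exact ⟨ε, hε, fun q hq => hmem q (by rw [mem_ball, dist_zero_right] at hq; linarith)⟩


-- ## Part A : directrix points are pedal points
lemma dir_sub (hB : IsReflectorBody n B) {X y : E n} (hXf : X ∈ frontier B)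
    (hy : y ∈ sph n) (heq : ‖X‖ - ⟪X, y⟫_ℝ = focal n B y) :
    ∃ u ∈ sph n, X - ‖X‖ • y = (2 * suppFn n B u) • u := by
  have hXB : X ∈ B := by
    rw [hB.1.isClosed.frontier_eq] at hXf; exact hXf.1
  have hXnotint : X ∉ interior B := by
    rw [hB.1.isClosed.frontier_eq] at hXf; exact hXf.2
  have hX0 : X ≠ 0 := fun h => hXnotint (h ▸ hB.2.1)
  have ha : 0 < ‖X‖ := norm_pos_iff.2 hX0
  set a : ℝ := ‖X‖ with hadef
  set w : E n := a⁻¹ • X with hwdef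
  have hw1 : ‖w‖ = 1 := by
    rw [hwdef, norm_smul, Real.norm_eq_abs, abs_of_pos (inv_pos.2 ha), ← hadef]
    field_simp
  set p : ℝ := focal n B y with hpdef
  have hp : 0 < p := focal_pos hB hy
  have hXw : ⟪X, w⟫_ℝ = a := by
    rw [hwdef, real_inner_smul_right, real_inner_self_eq_norm_sq, ← hadef]
    field_simp
  set v : E n := w - y with hvdef
  have hXv : ⟪X, v⟫_ℝ = p := by
    rw [hvdef, inner_sub_right, hXw]
    have hXy : ⟪X, y⟫_ℝ = a - p := by linarith [heq]
    rw [hXy]; ring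
  have hv0 : v ≠ 0 := by
    intro h; rw [h] at hXv; simp at hXv; exact hp.ne hXv
  have hvn : 0 < ‖v‖ := norm_pos_iff.2 hv0
  set u : E n := ‖v‖⁻¹ • v with hudef
  have hu1 : ‖u‖ = 1 := by
    rw [hudef, norm_smul, Real.norm_eq_abs, abs_of_pos (inv_pos.2 hvn)]
    field_simp
  have husph : u ∈ sph n := mem_sph hu1
  have hmax : ∀ X' ∈ B, ⟪X', u⟫_ℝ ≤ ⟪X, u⟫_ℝ := by
    intro X' hX'
    rw [hudef, real_inner_smul_right, real_inner_smul_right]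
    apply mul_le_mul_of_nonneg_left _ (inv_pos.2 hvn).le
    have h1 : ⟪X', w⟫_ℝ ≤ ‖X'‖ := by
      have := real_inner_le_norm X' w
      rwa [hw1, mul_one] at this
    have h2 : ⟪X', v⟫_ℝ = ⟪X', w⟫_ℝ - ⟪X', y⟫_ℝ := by rw [hvdef, inner_sub_right]
    have h3 : ‖X'‖ - ⟪X', y⟫_ℝ ≤ p := le_focal hB hX' y
    rw [h2, hXv]
    linarith
  have hsupp : suppFn n B u = ⟪X, u⟫_ℝ :=
    IsGreatest.csSup_eq ⟨⟨X, hXB, rfl⟩, by rintro _ ⟨X', hX', rfl⟩; exact hmax X' hX'⟩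
  have hXu : ⟪X, u⟫_ℝ = ‖v‖⁻¹ * p := by rw [hudef, real_inner_smul_right, hXv]
  have hv2 : a * ‖v‖ ^ 2 = 2 * p := by
    have hvv : ‖v‖ ^ 2 = 2 - 2 * (a⁻¹ * ⟪X, y⟫_ℝ) := by
      rw [hvdef, norm_sub_sq_real, hw1, norm_of_sph hy, hwdef, real_inner_smul_left]
      ring
    have hXy : ⟪X, y⟫_ℝ = a - p := by linarith [heq]
    rw [hvv, hXy]
    field_simp
    ring
  have hfin : X - ‖X‖ • y = a • v := by
    rw [hvdef, hwdef, smul_sub, ← hadef, smul_smul]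
    rw [mul_inv_cancel₀ ha.ne', one_smul]
  rw [hfin]
  refine ⟨u, husph, ?_⟩
  rw [hsupp, hXu, hudef, smul_smul]
  congr 1
  have : 2 * p = a * ‖v‖ ^ 2 := hv2.symm
  field_simp
  nlinarith [hv2]

-- ## Part B : pedal points are directrix points
lemma dir_sup (hB : IsReflectorBody n B) {u : E n} (hu : u ∈ sph n) :
    ∃ X ∈ frontier B, ∃ y ∈ sph n,
      ‖X‖ - ⟪X, y⟫_ℝ = focal n B y ∧ X - ‖X‖ • y = (2 * suppFn n B u) • u := by
  have hu1 : ‖u‖ = 1 := norm_of_sph hu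
  have hu0 : u ≠ 0 := by intro h; rw [h] at hu1; simp at hu1
  obtain ⟨X, hXB, hmax, hsupp⟩ := exists_max hB u
  set h : ℝ := suppFn n B u with hhdef
  have hh : 0 < h := suppFn_pos hB hu
  have hXu : ⟪X, u⟫_ℝ = h := hsupp.symm
  have hXfr : X ∈ frontier B := maxpt_frontier hB hu0 hXB hmax
  -- the pedal point h•u lies in 𝒰 but not in its interior
  have hpedal : h • u ∈ Uset n B := by
    refine ⟨X, hXB, ?_⟩
    have : ‖(2:ℝ) • (h • u) - X‖ ^ 2 = ‖X‖ ^ 2 := by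
      rw [norm_sub_sq_real]
      have e1 : ‖(2:ℝ) • (h • u)‖ ^ 2 = 4 * h ^ 2 := by
        rw [norm_smul, norm_smul, hu1, Real.norm_eq_abs, Real.norm_eq_abs,
          abs_of_pos hh]
        norm_num; ring
      have e2 : ⟪(2:ℝ) • (h • u), X⟫_ℝ = 2 * h * ⟪u, X⟫_ℝ := by
        rw [real_inner_smul_left, real_inner_smul_left]; ring
      rw [e1, e2, real_inner_comm X u, hXu]
      ring
    calc ‖(2:ℝ) • (h • u) - X‖ = ‖X‖ := by
          have h1 := le_of_pow_le_pow_left₀ two_ne_zero (norm_nonneg X) this.le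
          have h2 := le_of_pow_le_pow_left₀ two_ne_zero (norm_nonneg _) this.ge
          linarith
      _ ≤ ‖X‖ := le_refl _
  have hnotint : h • u ∉ interior (Uset n B) := by
    intro hint
    rw [mem_interior_iff_mem_nhds] at hint
    rcases Metric.mem_nhds_iff.1 hint with ⟨δ, hδ, hball⟩
    have hmem : (h + δ / 2) • u ∈ Uset n B := by
      apply hball
      rw [mem_ball, dist_eq_norm]
      have he : (h + δ / 2) • u - h • u = (δ / 2) • u := by module
      rw [he, norm_smul, hu1, Real.norm_eq_abs, abs_of_pos (half_pos hδ)]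
      simp; linarith
    have := Uset_radial hB hu1 (by linarith : (0:ℝ) ≤ h + δ / 2) hmem
    rw [← hhdef] at this
    linarith
  -- separating hyperplane
  obtain ⟨f, hf⟩ := geometric_hahn_banach_open_point
    (Convex.interior (Uset_convex hB)) isOpen_interior hnotint
  have hfle : ∀ q ∈ Uset n B, f q ≤ f (h • u) := by
    intro q hq
    have hseg : ∀ t : ℝ, 0 < t → t ≤ 1 → (1 - t) • q ∈ interior (Uset n B) := by
      intro t ht0 ht1
      have := (Uset_convex hB).combo_closure_interior_mem_interior
        (subset_closure hq) (Uset_zero_interior hB) (by linarith : (0:ℝ) ≤ 1 - t)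
        ht0 (by ring)
      simpa using this
    have hseq : ∀ k : ℕ, (1 - 1 / (k + 1 : ℝ)) * f q < f (h • u) := by
      intro k
      have hk : 0 < 1 / (k + 1 : ℝ) := by positivity
      have hk1 : 1 / (k + 1 : ℝ) ≤ 1 := by
        rw [div_le_one (by positivity)]
        have : (0:ℝ) ≤ k := Nat.cast_nonneg k
        linarith
      have := hf _ (hseg _ hk hk1)
      rwa [map_smul, smul_eq_mul] at this
    have htend : Filter.Tendsto (fun k : ℕ => (1 - 1 / (k + 1 : ℝ)) * f q)
        Filter.atTop (nhds (f q)) := by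
      have h1 : Filter.Tendsto (fun k : ℕ => 1 - 1 / (k + 1 : ℝ))
          Filter.atTop (nhds 1) := by
        have : Filter.Tendsto (fun n : ℕ => 1 / ((n : ℝ) + 1)) Filter.atTop (nhds 0) :=
          tendsto_one_div_add_atTop_nhds_zero_nat
        have h2 := Filter.Tendsto.const_sub (1:ℝ) this
        simpa using h2
      have := h1.mul_const (f q)
      simpa using this
    exact le_of_tendsto htend (Filter.Eventually.of_forall fun k => (hseq k).le)
  have hfpos : 0 < f (h • u) := by
    have := hf 0 (Uset_zero_interior hB)
    simpa using this
  -- turn f into a unit vector y₁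
  set Θ : E n := (InnerProductSpace.toDual ℝ (E n)).symm f with hΘdef
  have hΘ : ∀ z : E n, ⟪Θ, z⟫_ℝ = f z := fun z => InnerProductSpace.toDual_symm_apply
  have hΘu : 0 < ⟪Θ, u⟫_ℝ := by
    have h1 : ⟪Θ, h • u⟫_ℝ = f (h • u) := hΘ _
    rw [real_inner_smul_right] at h1
    nlinarith
  have hΘ0 : Θ ≠ 0 := by
    intro h0; rw [h0] at hΘu; simp at hΘu
  have hΘn : 0 < ‖Θ‖ := norm_pos_iff.2 hΘ0
  set y₁ : E n := -(‖Θ‖⁻¹ • Θ) with hy₁def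
  have hy₁1 : ‖y₁‖ = 1 := by
    rw [hy₁def, norm_neg, norm_smul, Real.norm_eq_abs, abs_of_pos (inv_pos.2 hΘn)]
    field_simp
  have hy₁sph : y₁ ∈ sph n := mem_sph hy₁1
  have hy₁inner : ∀ z : E n, ⟪z, y₁⟫_ℝ = -(‖Θ‖⁻¹ * f z) := by
    intro z
    rw [hy₁def, inner_neg_right, real_inner_smul_right, real_inner_comm, hΘ]
  have hfu : 0 < f u := by
    have h2 := hΘ u
    linarith [hΘu]
  have hy₁u : ⟪y₁, u⟫_ℝ < 0 := by
    have h1 : ⟪u, y₁⟫_ℝ = -(‖Θ‖⁻¹ * f u) := hy₁inner u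
    have h2 : ⟪y₁, u⟫_ℝ = ⟪u, y₁⟫_ℝ := real_inner_comm u y₁
    rw [h2, h1]
    have : 0 < ‖Θ‖⁻¹ * f u := by positivity
    linarith
  -- claim A : all of B is inside the paraboloid with axis y₁
  have claimA : ∀ X' ∈ B, ‖X'‖ - ⟪X', y₁⟫_ℝ ≤ -2 * ⟪y₁, u⟫_ℝ * h := by
    intro X' hX'
    have hq' : (1/2 : ℝ) • (X' - ‖X'‖ • y₁) ∈ Uset n B := by
      refine ⟨X', hX', ?_⟩
      have he : (2:ℝ) • ((1/2 : ℝ) • (X' - ‖X'‖ • y₁)) - X' = -(‖X'‖ • y₁) := by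
        module
      rw [he, norm_neg, norm_smul, hy₁1, Real.norm_eq_abs, abs_of_nonneg (norm_nonneg _)]
      simp
    have hle := hfle _ hq'
    have hfq : f ((1/2 : ℝ) • (X' - ‖X'‖ • y₁))
        = (1/2) * (f X' - ‖X'‖ * f y₁) := by
      rw [map_smul, smul_eq_mul, map_sub, map_smul, smul_eq_mul]
    have hfhu : f (h • u) = h * f u := by rw [map_smul, smul_eq_mul]
    rw [hfq, hfhu] at hle
    -- translate f into inner products with y₁ :  f z = -‖Θ‖ * ⟪z, y₁⟫
    have hfz : ∀ z : E n, f z = -(‖Θ‖ * ⟪z, y₁⟫_ℝ) := by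
      intro z
      have := hy₁inner z
      have h2 : ‖Θ‖ * ⟪z, y₁⟫_ℝ = ‖Θ‖ * (-(‖Θ‖⁻¹ * f z)) := by rw [this]
      rw [h2]
      field_simp
    have hy₁y₁ : ⟪y₁, y₁⟫_ℝ = 1 := by
      rw [real_inner_self_eq_norm_sq, hy₁1]; norm_num
    have hAx : (1/2) * (-(‖Θ‖ * ⟪X', y₁⟫_ℝ) - ‖X'‖ * (-(‖Θ‖ * 1)))
        ≤ h * (-(‖Θ‖ * ⟪u, y₁⟫_ℝ)) := by
      have e1 := hfz X'
      have e2 : f y₁ = -(‖Θ‖ * 1) := by rw [hfz y₁, hy₁y₁]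
      have e3 := hfz u
      rw [e1, e2, e3] at hle
      exact hle
    have hdiv : (1/2) * (‖X'‖ - ⟪X', y₁⟫_ℝ) ≤ h * (-⟪u, y₁⟫_ℝ) := by
      have := hAx
      have hexp : (1/2) * (-(‖Θ‖ * ⟪X', y₁⟫_ℝ) - ‖X'‖ * (-(‖Θ‖ * 1)))
          = ‖Θ‖ * ((1/2) * (‖X'‖ - ⟪X', y₁⟫_ℝ)) := by ring
      have hexp2 : h * (-(‖Θ‖ * ⟪u, y₁⟫_ℝ)) = ‖Θ‖ * (h * (-⟪u, y₁⟫_ℝ)) := by ring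
      rw [hexp, hexp2] at this
      exact le_of_mul_le_mul_left this hΘn
    rw [real_inner_comm y₁ u] at hdiv
    linarith
  -- claim B : the support point saturates
  set v₁ : E n := y₁ - (2 * ⟪y₁, u⟫_ℝ) • u with hv₁def
  have hv₁1 : ‖v₁‖ = 1 := by
    have hsq : ‖v₁‖ ^ 2 = 1 := by
      rw [hv₁def, norm_sub_sq_real, real_inner_smul_right, norm_smul,
        Real.norm_eq_abs, hu1, hy₁1, mul_one, sq_abs]
      ring
    nlinarith [norm_nonneg v₁]
  have hXv₁ : ⟪X, v₁⟫_ℝ = ⟪X, y₁⟫_ℝ - 2 * ⟪y₁, u⟫_ℝ * h := by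
    rw [hv₁def, inner_sub_right, real_inner_smul_right, hXu]
  have claimB : -2 * ⟪y₁, u⟫_ℝ * h ≤ ‖X‖ - ⟪X, y₁⟫_ℝ := by
    have h1 : ⟪X, v₁⟫_ℝ ≤ ‖X‖ := by
      have := real_inner_le_norm X v₁
      rwa [hv₁1, mul_one] at this
    rw [hXv₁] at h1
    linarith
  -- squeeze
  have hFeq : ‖X‖ - ⟪X, y₁⟫_ℝ = -2 * ⟪y₁, u⟫_ℝ * h :=
    le_antisymm (claimA X hXB) claimB
  have hfocal : focal n B y₁ = -2 * ⟪y₁, u⟫_ℝ * h :=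
    le_antisymm (focal_le hB claimA) (hFeq ▸ le_focal hB hXB y₁)
  have hXfoc : ‖X‖ - ⟪X, y₁⟫_ℝ = focal n B y₁ := by rw [hFeq, hfocal]
  -- Cauchy–Schwarz equality : X = ‖X‖ • v₁
  have hXveq : ⟪X, v₁⟫_ℝ = ‖X‖ * ‖v₁‖ := by
    rw [hv₁1, mul_one, hXv₁]
    linarith
  have hXcol : X = ‖X‖ • v₁ := by
    have := inner_eq_norm_mul_iff_real.1 hXveq
    rwa [hv₁1, one_smul] at this
  refine ⟨X, hXfr, y₁, hy₁sph, hXfoc, ?_⟩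
  have hcoef : h = -(‖X‖ * ⟪y₁, u⟫_ℝ) := by
    have : ⟪X, u⟫_ℝ = ‖X‖ * ⟪v₁, u⟫_ℝ := by
      conv_lhs => rw [hXcol]
      rw [real_inner_smul_left]
    rw [hXu] at this
    have hv₁u : ⟪v₁, u⟫_ℝ = -⟪y₁, u⟫_ℝ := by
      rw [hv₁def, inner_sub_left, real_inner_smul_left, real_inner_self_eq_norm_sq,
        hu1]
      ring
    rw [hv₁u] at this
    linarith [this]
  have : X - ‖X‖ • y₁ = (-2 * ⟪y₁, u⟫_ℝ * ‖X‖) • u := by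
    calc X - ‖X‖ • y₁ = ‖X‖ • v₁ - ‖X‖ • y₁ := by rw [← hXcol]
      _ = (-2 * ⟪y₁, u⟫_ℝ * ‖X‖) • u := by rw [hv₁def]; module
  have hscal : -2 * ⟪y₁, u⟫_ℝ * ‖X‖ = 2 * -(‖X‖ * ⟪y₁, u⟫_ℝ) := by ring
  rw [this, hcoef, hscal]

lemma smooth_part (hB : IsReflectorBody n B) :
    ContDiffOn ℝ 1 (fun u : E n => (2 * suppFn n B u) • u) {(0 : E n)}ᶜ := by
  obtain ⟨R, hR0, hR⟩ := exists_R hB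
  have hex : ∀ U : E n, ∃ X, X ∈ B ∧ (∀ X' ∈ B, ⟪X', U⟫_ℝ ≤ ⟪X, U⟫_ℝ) ∧
      suppFn n B U = ⟪X, U⟫_ℝ := exists_max hB
  choose Xs hmem hmax heq using hex
  -- continuity of the support point selection
  have hcont : ∀ U₀ : E n, U₀ ≠ 0 → ∀ ε : ℝ, 0 < ε →
      ∃ δ : ℝ, 0 < δ ∧ ∀ V : E n, ‖V - U₀‖ < δ → ‖Xs V - Xs U₀‖ ≤ ε := by
    intro U₀ hU₀ ε hε
    have hinner_lip : ∀ (Z V W : E n), Z ∈ B → ⟪Z, V⟫_ℝ - ⟪Z, W⟫_ℝ ≤ R * ‖V - W‖ := by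
      intro Z V W hZ
      have h1 : ⟪Z, V - W⟫_ℝ ≤ ‖Z‖ * ‖V - W‖ := real_inner_le_norm _ _
      have h2 : ‖Z‖ * ‖V - W‖ ≤ R * ‖V - W‖ :=
        mul_le_mul_of_nonneg_right (hR Z hZ) (norm_nonneg _)
      have h3 : ⟪Z, V - W⟫_ℝ = ⟪Z, V⟫_ℝ - ⟪Z, W⟫_ℝ := inner_sub_right _ _ _
      linarith
    by_cases hK : (B ∩ {X' : E n | ε ≤ ‖X' - Xs U₀‖}).Nonempty
    · have hKclosed : IsClosed {X' : E n | ε ≤ ‖X' - Xs U₀‖} :=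
        isClosed_le continuous_const ((continuous_id.sub continuous_const).norm)
      have hKcomp : IsCompact (B ∩ {X' : E n | ε ≤ ‖X' - Xs U₀‖}) :=
        hB.1.inter_right hKclosed
      obtain ⟨Xm, hXmK, hXmmax⟩ := hKcomp.exists_isMaxOn hK
        ((continuous_id.inner continuous_const).continuousOn :
          ContinuousOn (fun X : E n => ⟪X, U₀⟫_ℝ) _)
      set m : ℝ := ⟪Xm, U₀⟫_ℝ with hm
      have hlt : m < ⟪Xs U₀, U₀⟫_ℝ := by
        rcases lt_or_eq_of_le (hmax U₀ Xm hXmK.1) with h | h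
        · exact h
        · exfalso
          have hXmmax' : ∀ X' ∈ B, ⟪X', U₀⟫_ℝ ≤ ⟪Xm, U₀⟫_ℝ := by
            intro X' hX'
            rw [h]
            exact hmax U₀ X' hX'
          have := unique_max hB hU₀ hXmK.1 hXmmax' (hmem U₀) (hmax U₀)
          have hdist := hXmK.2
          rw [this] at hdist
          simp only [mem_setOf_eq, sub_self, norm_zero] at hdist
          linarith
      set κ : ℝ := ⟪Xs U₀, U₀⟫_ℝ - m with hκ
      have hκ0 : 0 < κ := by rw [hκ]; linarith
      refine ⟨κ / (2 * R + 1), by positivity, fun V hV => ?_⟩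
      have key : m < ⟪Xs V, U₀⟫_ℝ := by
        have k1 : ⟪Xs V, U₀⟫_ℝ ≥ ⟪Xs V, V⟫_ℝ - R * ‖V - U₀‖ := by
          have := hinner_lip (Xs V) V U₀ (hmem V)
          linarith
        have k2 : ⟪Xs V, V⟫_ℝ ≥ ⟪Xs U₀, V⟫_ℝ := hmax V (Xs U₀) (hmem U₀)
        have k3 : ⟪Xs U₀, V⟫_ℝ ≥ ⟪Xs U₀, U₀⟫_ℝ - R * ‖V - U₀‖ := by
          have h3' := hinner_lip (Xs U₀) U₀ V (hmem U₀)
          rw [norm_sub_rev U₀ V] at h3'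
          linarith
        have hRV : R * ‖V - U₀‖ ≤ R * (κ / (2 * R + 1)) :=
          mul_le_mul_of_nonneg_left hV.le hR0.le
        have hfrac : 2 * (R * (κ / (2 * R + 1))) < κ := by
          rw [div_eq_mul_inv]
          have h2R : 0 < 2 * R + 1 := by linarith
          rw [show 2 * (R * (κ * (2 * R + 1)⁻¹)) = κ * ((2 * R) * (2 * R + 1)⁻¹) by ring]
          have : (2 * R) * (2 * R + 1)⁻¹ < 1 := by
            rw [mul_inv_lt_iff₀ h2R]; linarith
          nlinarith
        rw [hκ] at hfrac
        linarith
      by_contra hcon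
      push_neg at hcon
      have hmemK : Xs V ∈ B ∩ {X' : E n | ε ≤ ‖X' - Xs U₀‖} := ⟨hmem V, hcon.le⟩
      have h5 := hXmmax hmemK
      simp only [id_eq, mem_setOf_eq] at h5
      rw [hm] at key
      linarith
    · refine ⟨1, one_pos, fun V _ => ?_⟩
      rw [Set.not_nonempty_iff_eq_empty] at hK
      by_contra hcon
      push_neg at hcon
      have : Xs V ∈ B ∩ {X' : E n | ε ≤ ‖X' - Xs U₀‖} := ⟨hmem V, hcon.le⟩
      rw [hK] at this
      exact this
  -- differentiability of the support function
  have hfder : ∀ U₀ : E n, U₀ ≠ 0 →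
      HasFDerivAt (suppFn n B) (innerSL ℝ (Xs U₀)) U₀ := by
    intro U₀ hU₀
    rw [hasFDerivAt_iff_isLittleO_nhds_zero, Asymptotics.isLittleO_iff]
    intro C hC
    obtain ⟨δ, hδ, hδp⟩ := hcont U₀ hU₀ C hC
    rw [Metric.eventually_nhds_iff_ball]
    refine ⟨δ, hδ, fun t ht => ?_⟩
    rw [mem_ball, dist_zero_right] at ht
    have hlow : 0 ≤ suppFn n B (U₀ + t) - suppFn n B U₀ - ⟪Xs U₀, t⟫_ℝ := by
      have h1 : ⟪Xs U₀, U₀ + t⟫_ℝ ≤ suppFn n B (U₀ + t) := le_suppFn hB (hmem U₀) _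
      rw [inner_add_right] at h1
      rw [heq U₀]
      linarith
    have hup : suppFn n B (U₀ + t) - suppFn n B U₀ - ⟪Xs U₀, t⟫_ℝ ≤ C * ‖t‖ := by
      have h1 : suppFn n B (U₀ + t) = ⟪Xs (U₀ + t), U₀⟫_ℝ + ⟪Xs (U₀ + t), t⟫_ℝ := by
        rw [heq (U₀ + t), inner_add_right]
      have h2 : ⟪Xs (U₀ + t), U₀⟫_ℝ ≤ suppFn n B U₀ := le_suppFn hB (hmem (U₀ + t)) _
      have h3 : ⟪Xs (U₀ + t), t⟫_ℝ - ⟪Xs U₀, t⟫_ℝ ≤ C * ‖t‖ := by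
        have e1 : ⟪Xs (U₀ + t) - Xs U₀, t⟫_ℝ = ⟪Xs (U₀ + t), t⟫_ℝ - ⟪Xs U₀, t⟫_ℝ :=
          inner_sub_left _ _ _
        have e2 : ⟪Xs (U₀ + t) - Xs U₀, t⟫_ℝ ≤ ‖Xs (U₀ + t) - Xs U₀‖ * ‖t‖ :=
          real_inner_le_norm _ _
        have e3 : ‖Xs (U₀ + t) - Xs U₀‖ ≤ C := by
          apply hδp
          simpa using ht
        have e4 : ‖Xs (U₀ + t) - Xs U₀‖ * ‖t‖ ≤ C * ‖t‖ :=
          mul_le_mul_of_nonneg_right e3 (norm_nonneg _)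
        linarith
      linarith
    have happ : (innerSL ℝ (Xs U₀)) t = ⟪Xs U₀, t⟫_ℝ := rfl
    rw [Real.norm_eq_abs, happ, abs_le]
    have hCt : 0 ≤ C * ‖t‖ := mul_nonneg hC.le (norm_nonneg _)
    exact ⟨by linarith, by linarith⟩
  have hopen : IsOpen ({(0 : E n)}ᶜ : Set (E n)) := isOpen_compl_singleton
  have hXscont : ContinuousOn Xs ({(0 : E n)}ᶜ : Set (E n)) := by
    intro U₀ hU₀
    apply ContinuousAt.continuousWithinAt
    rw [Metric.continuousAt_iff]
    intro ε hε
    obtain ⟨δ, hδ, hp⟩ := hcont U₀ (by simpa using hU₀) (ε / 2) (half_pos hε)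
    refine ⟨δ, hδ, fun {V} hV => ?_⟩
    have : ‖Xs V - Xs U₀‖ ≤ ε / 2 := by
      apply hp
      rwa [dist_eq_norm] at hV
    rw [dist_eq_norm]
    linarith
  have hdiff : DifferentiableOn ℝ (suppFn n B) ({(0 : E n)}ᶜ : Set (E n)) :=
    fun U hU => ((hfder U (by simpa using hU)).differentiableAt).differentiableWithinAt
  have hfeq : ∀ U ∈ ({(0 : E n)}ᶜ : Set (E n)),
      (fun U => innerSL ℝ (Xs U)) U = fderiv ℝ (suppFn n B) U :=
    fun U hU => ((hfder U (by simpa using hU)).fderiv).symm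
  have hfcont : ContinuousOn (fderiv ℝ (suppFn n B)) ({(0 : E n)}ᶜ : Set (E n)) := by
    apply ContinuousOn.congr _ (fun U hU => (hfeq U hU).symm)
    exact (innerSL ℝ (E := E n)).continuous.comp_continuousOn hXscont
  have h1 : ContDiffOn ℝ 1 (suppFn n B) ({(0 : E n)}ᶜ : Set (E n)) := by
    rw [show (1 : WithTop ℕ∞) = 0 + 1 from rfl,
      contDiffOn_succ_iff_fderiv_of_isOpen hopen]
    refine ⟨hdiff, ?_, ?_⟩
    · intro h; exact absurd h (by simp)
    · rw [contDiffOn_zero]; exact hfcont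
  exact (((contDiffOn_const (c := (2:ℝ))).mul h1).smul contDiffOn_id)

end S17

/-- The directrix admits the parametrization `D(R) = {2h(u)u : u ∈ Sⁿ}`
(a rescaling by the factor 2 of the pedal hypersurface of `R`), and the map
`u ↦ 2h(u)u` is of class `C¹` (away from the origin, hence in particular on `Sⁿ`). -/
theorem statement17 (n : ℕ) (hn : 1 ≤ n) (B : Set (E n)) (hB : IsReflectorBody n B) :
    directrix n B = (fun u : E n => (2 * suppFn n B u) • u) '' sph n ∧
    ContDiffOn ℝ 1 (fun u : E n => (2 * suppFn n B u) • u) {(0 : E n)}ᶜ := by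
  constructor
  · ext Z
    constructor
    · rintro ⟨X, hXf, y, hy, heqF, rfl⟩
      obtain ⟨u, hu, hZ⟩ := S17.dir_sub hB hXf hy heqF
      exact ⟨u, hu, hZ.symm⟩
    · rintro ⟨u, hu, rfl⟩
      obtain ⟨X, hXf, y, hy, h1, h2⟩ := S17.dir_sup hB hu
      exact ⟨X, hXf, y, hy, h1, h2.symm⟩
  · exact S17.smooth_part hB
end
end
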